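/- arXiv:gr-qc/0210061 — 8 statements merged into one kernel-verified Lean document; each statement's English description precedes it below -/
import Mathlib

section
/- Let a and b be countable past-finite partial orders having the same stems. If every level of a contains only finitely many non-maximal elements, then a and b are order-isomorphic. (Lemma: Θ ⊆ Γ.) -/
/-- A poset (given by its order relation `le`) is *past-finite* if the past
`{y | y ≤ x}` of every element `x` is finite. -/
def PastFinite {α : Type} (le : α → α → Prop) : Prop := ∀ x : α, {y : α | le y x}.Finite

/-- The finite poset `s` on `Fin n` *is a stem in* the poset `(α, le)`: there is an
order-embedding of `s` into `(α, le)` whose image is a down-closed (lower) set. -/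
def IsStemIn {α : Type} {n : ℕ} (s : Fin n → Fin n → Prop) (le : α → α → Prop) : Prop :=
  ∃ f : Fin n → α, Function.Injective f ∧ (∀ i j, s i j ↔ le (f i) (f j)) ∧
    ∀ (x : α) (j : Fin n), le x (f j) → ∃ i, f i = x

/-- Two posets *have the same stems* if every finite poset is a stem in one iff it is a
stem in the other (every finite poset is isomorphic to one on some `Fin n`). -/
def SameStems {α β : Type} (le₁ : α → α → Prop) (le₂ : β → β → Prop) : Prop :=
  ∀ (n : ℕ) (s : Fin n → Fin n → Prop), IsStemIn s le₁ ↔ IsStemIn s le₂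

/-- The posets `(α, le₁)` and `(β, le₂)` are order-isomorphic. -/
def OrderIsoRel {α β : Type} (le₁ : α → α → Prop) (le₂ : β → β → Prop) : Prop :=
  ∃ e : α ≃ β, ∀ x y : α, le₁ x y ↔ le₂ (e x) (e y)

/-- Strict order relation associated to `le` (in a partial order). -/
def LtRel {α : Type} (le : α → α → Prop) (x y : α) : Prop := le x y ∧ x ≠ y

/-- `x` is maximal: no element lies strictly above it. -/
def IsMaximalRel {α : Type} (le : α → α → Prop) (x : α) : Prop := ∀ y, le x y → y = x

/-- There is a chain `x₀ < x₁ < ⋯ < x_k = x` (of length `k`) with top element `x`. -/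
def ChainTo {α : Type} (le : α → α → Prop) (x : α) (k : ℕ) : Prop :=
  ∃ f : Fin (k + 1) → α, (∀ i j : Fin (k + 1), i < j → LtRel le (f i) (f j)) ∧ f (Fin.last k) = x

/-- `x` has level `k`: `k` is the maximum length of a chain with top element `x`. -/
def HasLevel {α : Type} (le : α → α → Prop) (x : α) (k : ℕ) : Prop :=
  ChainTo le x k ∧ ∀ m, ChainTo le x m → m ≤ k

/-- A causet (countable past-finite partial order) is *rogue* if there exists a causet
not order-isomorphic to it having the same stems. -/
def IsRogueRel {α : Type} (le : α → α → Prop) : Prop :=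
  ∃ (β : Type) (le' : β → β → Prop), IsPartialOrder β le' ∧ Countable β ∧ PastFinite le' ∧
    ¬ OrderIsoRel le le' ∧ SameStems le le'

/-!
Write `L k` for the set of non-maximal elements of height at most `k`. Copying into `b` a finite
stem of `a` that contains a strict upper bound of every element of `L k` sends `L k(a)` into
`L k(b)`; hence `|L k(b)| ≤ |L k(a)|`, by symmetry these finite sizes agree, and a stem covering
`L (k + 1)` is copied with `L k(a)` going onto `L k(b)`. If the stem also contains up to `k`
maximal elements over each `P ⊆ L k`, they stay maximal in `b`, so the number of maximal elements
with strict past `P`, truncated at `k`, can only grow along the copy. Doing this in both directions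
and iterating on the finite set `L k(a)` yields isomorphisms `L k(a) ≅ L k(b)` preserving the
truncated multiplicities, and König's lemma turns them into a single isomorphism of the non-maximal
parts preserving all multiplicities. A maximal element is determined by its strict past, a finite
set of non-maximal elements, so by countability this isomorphism extends fiber by fiber to
`a ≅ b`.
-/

open Set Order Function

universe u v

section Combinatorics

variable {α β : Type*}

theorem Set.Finite.exists_pos_iterate_eqOn_id {s : Set α} (hs : s.Finite) {f : α → α}
    (hmaps : MapsTo f s s) (hinj : InjOn f s) : ∃ r, 0 < r ∧ EqOn (f^[r]) id s := by
  have := hs.to_subtype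
  let σ : Equiv.Perm s :=
    Equiv.ofBijective _ (Finite.injective_iff_bijective.mp (hmaps.restrict_inj.mpr hinj))
  obtain ⟨r, hr, hσ⟩ := (isOfFinOrder_of_finite σ).exists_pow_eq_one
  refine ⟨r, hr, fun x hx => ?_⟩
  have := congrArg (fun τ : Equiv.Perm s => (τ ⟨x, hx⟩ : α)) hσ
  simpa [σ, Equiv.Perm.coe_pow, MapsTo.coe_iterate_restrict] using this

/-- Some iterate of `g ∘ f` fixes `A` pointwise, so the chain
`d P ≤ d' (f '' P) ≤ d (g '' f '' P) ≤ ⋯ ≤ d P` closes up. -/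
theorem eq_of_le_image_of_le_image {γ : Type*} [PartialOrder γ] {A : Set α} {B : Set β}
    (hA : A.Finite) {f : α → β} {g : β → α} (hf : MapsTo f A B) (hg : MapsTo g B A)
    (hfi : InjOn f A) (hgi : InjOn g B) {d : Set α → γ} {d' : Set β → γ}
    (hfd : ∀ P ⊆ A, d P ≤ d' (f '' P)) (hgd : ∀ Q ⊆ B, d' Q ≤ d (g '' Q))
    {P : Set α} (hP : P ⊆ A) : d' (f '' P) = d P := by
  have hstep : ∀ Q ⊆ A, d Q ≤ d ((g ∘ f) '' Q) ∧ (g ∘ f) '' Q ⊆ A := fun Q hQ =>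
    ⟨(hfd Q hQ).trans (image_comp g f Q ▸ hgd _ (hf.mono_left hQ).image_subset),
      ((hg.comp hf).mono_left hQ).image_subset⟩
  have hiter : ∀ m, ∀ Q ⊆ A, d Q ≤ d ((g ∘ f)^[m] '' Q) := by
    intro m
    induction m with
    | zero => simp
    | succ m ih =>
      intro Q hQ
      rw [iterate_succ, image_comp]
      exact (hstep Q hQ).1.trans (ih _ (hstep Q hQ).2)
  obtain ⟨r, hr, hid⟩ := hA.exists_pos_iterate_eqOn_id (hg.comp hf) (hgi.comp hfi hf)
  have hfix : (g ∘ f)^[r] '' P = P := by rw [(hid.mono hP).image_eq, image_id]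
  refine le_antisymm ?_ (hfd P hP)
  calc d' (f '' P) ≤ d ((g ∘ f) '' P) := image_comp g f P ▸ hgd _ (hf.mono_left hP).image_subset
    _ ≤ d ((g ∘ f)^[r - 1] '' ((g ∘ f) '' P)) := hiter _ _ (hstep P hP).2
    _ = d P := by rw [← image_comp, ← iterate_succ, show (r - 1).succ = r by omega, hfix]

theorem Equiv.exists_bijOn [Nonempty β] {s : Set α} {t : Set β} (e : s ≃ t) :
    ∃ f : α → β, BijOn f s t ∧ ∀ x : s, f x = e x := by
  let f := Function.extend Subtype.val (fun x : s => (e x : β)) fun _ => Classical.arbitrary β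
  have hf (x : s) : f x = e x := Subtype.val_injective.extend_apply _ _ x
  refine ⟨f, ⟨fun x hx => hf ⟨x, hx⟩ ▸ (e _).2, fun x hx y hy hxy => ?_, fun y hy => ?_⟩, hf⟩
  · rw [hf ⟨x, hx⟩, hf ⟨y, hy⟩] at hxy
    exact congrArg Subtype.val (e.injective (Subtype.ext hxy))
  · exact ⟨e.symm ⟨y, hy⟩, (e.symm _).2, by rw [hf, e.apply_symm_apply]⟩

theorem nonempty_equiv_of_encard_eq {α : Type u} {β : Type v} [Countable α] [Countable β]
    {s : Set α} {t : Set β} (h : s.encard = t.encard) : Nonempty (s ≃ t) := by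
  have h' : (Cardinal.lift.{v} (Cardinal.mk s)).toENat =
      (Cardinal.lift.{u} (Cardinal.mk t)).toENat := by simpa using h
  exact Cardinal.lift_mk_eq'.mp ((Cardinal.toENat_eq_iff_of_le_aleph0
    (Cardinal.lift_le_aleph0.mpr Cardinal.mk_le_aleph0)
    (Cardinal.lift_le_aleph0.mpr Cardinal.mk_le_aleph0)).mp h')

theorem ENat.eq_of_forall_ge_min_eq {a b : ℕ∞} {k : ℕ}
    (h : ∀ m ≥ k, min (m : ℕ∞) a = min (m : ℕ∞) b) : a = b := by
  have key (a b : ℕ∞) (h : ∀ m ≥ k, min (m : ℕ∞) a = min (m : ℕ∞) b) : a ≤ b :=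
    ENat.forall_natCast_le_iff_le.mp fun n hn =>
      calc (n : ℕ∞) ≤ min ((max n k : ℕ) : ℕ∞) a := le_min (by exact_mod_cast le_max_left n k) hn
        _ = min ((max n k : ℕ) : ℕ∞) b := h _ (le_max_right n k)
        _ ≤ b := min_le_right _ _
  exact le_antisymm (key a b h) (key b a fun m hm => (h m hm).symm)

end Combinatorics

section InverseSystem

variable {α β : Type*}

theorem exists_eqOn_frequently {A : Set α} {B : Set β} (hA : A.Finite) (hB : B.Finite)
    (f : ℕ → α → β) (hf : ∀ n, MapsTo (f n) A B) : ∃ n₀, ∀ N, ∃ n ≥ N, EqOn (f n) (f n₀) A := by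
  have := hA.to_subtype
  have := hB.to_subtype
  obtain ⟨r, hr⟩ := Finite.exists_infinite_fiber fun n => (hf n).restrict
  have hr' := Set.infinite_coe_iff.mp hr
  obtain ⟨n₀, hn₀⟩ := hr'.nonempty
  refine ⟨n₀, fun N => ?_⟩
  obtain ⟨n, hn, hNn⟩ := hr'.exists_gt N
  refine ⟨n, hNn.le, fun x hx => ?_⟩
  simpa using congrArg Subtype.val (congrFun (hn.trans hn₀.symm) ⟨x, hx⟩)

variable {A : ℕ → Set α} {B : ℕ → Set β} {G : ℕ → (α → β) → Prop}

def ExtendsBeyond (G : ℕ → (α → β) → Prop) (k : ℕ) (S : Set α) (f : α → β) : Prop :=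
  ∀ m ≥ k, ∃ g, G m g ∧ EqOn f g S

variable (hA : ∀ k, (A k).Finite) (hB : ∀ k, (B k).Finite)
  (hmaps : ∀ k f, G k f → MapsTo f (A k) (B k)) (hmono : ∀ k m f, k ≤ m → G m f → G k f)
include hA hB hmaps hmono

/-- Pigeonhole on the finitely many restrictions to `A k` of the solutions extending `f`. -/
theorem ExtendsBeyond.exists_extendsBeyond_finite {k : ℕ} {S : Set α} {f : α → β}
    (hf : ExtendsBeyond G k S f) : ∃ g, ExtendsBeyond G k (A k) g ∧ EqOn f g S := by
  choose h hG hS using fun n => hf (max k n) (le_max_left _ _)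
  obtain ⟨n₀, hn₀⟩ := exists_eqOn_frequently (hA k) (hB k) h
    fun n => hmaps k _ (hmono _ _ _ (le_max_left _ _) (hG n))
  refine ⟨h n₀, fun m hm => ?_, hS n₀⟩
  obtain ⟨n, hn, heq⟩ := hn₀ m
  exact ⟨h n, hmono _ _ _ (le_max_of_le_right hn) (hG n), heq.symm⟩

theorem exists_seq_extendsBeyond (hex : ∀ k, ∃ f, G k f) :
    ∃ seq : ℕ → α → β, ∀ k, ExtendsBeyond G k (A k) (seq k) ∧ EqOn (seq k) (seq (k + 1)) (A k) := by
  have hnext (k : ℕ) (f : α → β) : ∃ g, ExtendsBeyond G k (A k) f →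
      ExtendsBeyond G (k + 1) (A (k + 1)) g ∧ EqOn f g (A k) := by
    by_cases hf : ExtendsBeyond G k (A k) f
    · obtain ⟨g, hg, hfg⟩ := ExtendsBeyond.exists_extendsBeyond_finite hA hB hmaps hmono
        fun m hm => hf m (Nat.le_of_succ_le hm)
      exact ⟨g, fun _ => ⟨hg, hfg⟩⟩
    · exact ⟨f, fun h => absurd h hf⟩
  choose next hnext using hnext
  obtain ⟨f₀, -⟩ := hex 0
  obtain ⟨g₀, hg₀, -⟩ := ExtendsBeyond.exists_extendsBeyond_finite hA hB hmaps hmono (k := 0)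
    (S := ∅) (f := f₀) fun m _ => (hex m).imp fun g hg => ⟨hg, eqOn_empty _ _⟩
  let seq : ℕ → α → β := fun k => Nat.rec g₀ next k
  have hseq (k : ℕ) : ExtendsBeyond G k (A k) (seq k) := by
    induction k with
    | zero => exact hg₀
    | succ k ih => exact (hnext k (seq k) ih).1
  exact ⟨seq, fun k => ⟨hseq k, (hnext k (seq k) (hseq k)).2⟩⟩

/-- König's lemma for the inverse system of restrictions to the finite sets `A k` of solutions
of `G k`. -/
theorem exists_forall_of_inverseSystem (hAmono : Monotone A)
    (hcongr : ∀ k f g, G k f → EqOn f g (A k) → G k g) (hex : ∀ k, ∃ f, G k f) :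
    ∃ φ, ∀ k, G k φ := by
  obtain ⟨seq, hseq⟩ := exists_seq_extendsBeyond hA hB hmaps hmono hex
  have hcoh (k m : ℕ) (hkm : k ≤ m) : EqOn (seq k) (seq m) (A k) := by
    induction m, hkm using Nat.le_induction with
    | base => exact eqOn_refl _ _
    | succ m hkm ih => exact ih.trans ((hseq m).2.mono (hAmono hkm))
  have hcoh' (k m : ℕ) {x : α} (hk : x ∈ A k) (hm : x ∈ A m) : seq k x = seq m x :=
    (hcoh k _ (le_max_left k m) hk).trans (hcoh m _ (le_max_right k m) hm).symm
  classical
  let idx (x : α) : ℕ := if h : ∃ k, x ∈ A k then h.choose else 0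
  have hidx (k : ℕ) {x : α} (hx : x ∈ A k) : x ∈ A (idx x) := by
    have h : ∃ k, x ∈ A k := ⟨k, hx⟩
    simpa only [idx, dif_pos h] using h.choose_spec
  refine ⟨fun x => seq (idx x) x, fun k => ?_⟩
  obtain ⟨g, hg, hkg⟩ := (hseq k).1 k le_rfl
  exact hcongr k g _ hg fun x hx => (hkg hx).symm.trans (hcoh' k _ hx (hidx k hx))

end InverseSystem

section Posets

variable {α β : Type*} [PartialOrder α] [PartialOrder β]

theorem Order.height_coe_of_isLowerSet {T : Set α} (hT : IsLowerSet T) (x : T) :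
    height (x : α) = height x :=
  (height_eq_of_strictMono Subtype.val (fun _ _ h => h)
    (fun a b hb => ⟨⟨b, hT hb.le a.2⟩, hb, rfl⟩) x).symm

theorem Order.height_lt_top_of_finite_Iic {x : α} (hx : (Iic x).Finite) : height x < ⊤ := by
  have := hx.fintype
  rw [height_coe_of_isLowerSet (isLowerSet_Iic x) ⟨x, le_rfl⟩]
  exact (height_le fun p _ => Nat.cast_le.mpr p.length_lt_card.le).trans_lt
    (ENat.natCast_lt_top _)

def IsOrderIsoOn (f : α → β) (s : Set α) (t : Set β) : Prop :=
  BijOn f s t ∧ ∀ ⦃x⦄, x ∈ s → ∀ ⦃y⦄, y ∈ s → (f x ≤ f y ↔ x ≤ y)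

namespace IsOrderIsoOn

variable {f g : α → β} {s : Set α} {t : Set β}

theorem congr (h : IsOrderIsoOn f s t) (hfg : EqOn f g s) : IsOrderIsoOn g s t :=
  ⟨h.1.congr hfg, fun _ hx _ hy => hfg hx ▸ hfg hy ▸ h.2 hx hy⟩

noncomputable def orderIso (h : IsOrderIsoOn f s t) : s ≃o t where
  toEquiv := h.1.equiv
  map_rel_iff' := @fun x y => h.2 x.2 y.2

theorem height_eq (h : IsOrderIsoOn f s t) (hs : IsLowerSet s) (ht : IsLowerSet t) {x : α}
    (hx : x ∈ s) : height (f x) = height x := by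
  have := height_orderIso h.orderIso ⟨x, hx⟩
  rwa [← height_coe_of_isLowerSet hs, ← height_coe_of_isLowerSet ht] at this

theorem iUnion {s : ℕ → Set α} {t : ℕ → Set β} (hs : Monotone s)
    (h : ∀ k, IsOrderIsoOn f (s k) (t k)) :
    IsOrderIsoOn f (⋃ k, s k) (⋃ k, t k) := by
  refine ⟨bijOn_iUnion_of_directed hs.directed_le fun k => (h k).1, fun x hx y hy => ?_⟩
  obtain ⟨i, hi⟩ := mem_iUnion.mp hx
  obtain ⟨j, hj⟩ := mem_iUnion.mp hy
  exact (h (max i j)).2 (hs (le_max_left i j) hi) (hs (le_max_right i j) hj)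

theorem subset (h : IsOrderIsoOn f s t) {s' : Set α} (hs' : s' ⊆ s) :
    IsOrderIsoOn f s' (f '' s') :=
  ⟨(h.1.injOn.mono hs').bijOn_image, fun _ hx _ hy => h.2 (hs' hx) (hs' hy)⟩

theorem lt_iff_lt (h : IsOrderIsoOn f s t) {x y : α} (hx : x ∈ s) (hy : y ∈ s) :
    f x < f y ↔ x < y := by
  simp only [lt_iff_le_and_ne, h.2 hx hy, h.1.injOn.ne_iff hx hy]

theorem image_Iio (h : IsOrderIsoOn f s t) (hs : IsLowerSet s) (ht : IsLowerSet t) {x : α}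
    (hx : x ∈ s) : f '' Iio x = Iio (f x) := by
  refine Subset.antisymm ?_ fun z hz => ?_
  · rintro _ ⟨y, hy, rfl⟩
    exact (h.lt_iff_lt (hs hy.le hx) hx).mpr hy
  · obtain ⟨y, hys, rfl⟩ := h.1.surjOn (ht hz.le (h.1.mapsTo hx))
    exact ⟨y, (h.lt_iff_lt hys hx).mp hz, rfl⟩

end IsOrderIsoOn

def nonMaxUpTo (α : Type*) [PartialOrder α] (k : ℕ) : Set α := {x | ¬IsMax x ∧ height x ≤ k}

theorem isLowerSet_nonMaxUpTo (k : ℕ) : IsLowerSet (nonMaxUpTo α k) := by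
  intro x y hyx hx
  exact ⟨fun hy => hx.1 fun b hb => (hy (hyx.trans hb)).trans hyx, (height_mono hyx).trans hx.2⟩

theorem nonMaxUpTo_mono : Monotone (nonMaxUpTo α) :=
  fun _ _ hkm _ hx => ⟨hx.1, hx.2.trans (Nat.cast_le.mpr hkm)⟩

theorem iUnion_nonMaxUpTo (h : ∀ x : α, height x < ⊤) :
    ⋃ k, nonMaxUpTo α k = {x | ¬IsMax x} := by
  ext x
  simp only [nonMaxUpTo, mem_iUnion, mem_ofPred]
  refine ⟨fun ⟨_, hx, _⟩ => hx, fun hx => ?_⟩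
  obtain ⟨k, hk⟩ := ENat.ne_top_iff_exists.mp (h x).ne
  exact ⟨k, hx, hk.ge⟩

theorem IsOrderIsoOn.nonMaxUpTo_of_le {f : α → β} {k m : ℕ}
    (h : IsOrderIsoOn f (nonMaxUpTo α m) (nonMaxUpTo β m)) (hkm : k ≤ m) :
    IsOrderIsoOn f (nonMaxUpTo α k) (nonMaxUpTo β k) := by
  have hsubα := nonMaxUpTo_mono (α := α) hkm
  have hsubβ := nonMaxUpTo_mono (α := β) hkm
  have hheight {x} (hx : x ∈ nonMaxUpTo α m) : height (f x) = height x :=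
    h.height_eq (isLowerSet_nonMaxUpTo m) (isLowerSet_nonMaxUpTo m) hx
  refine ⟨⟨fun x hx => ⟨(h.1.mapsTo (hsubα hx)).1, (hheight (hsubα hx)).trans_le hx.2⟩,
    h.1.injOn.mono hsubα, fun y hy => ?_⟩, fun x hx y hy => h.2 (hsubα hx) (hsubα hy)⟩
  obtain ⟨x, hx, rfl⟩ := h.1.surjOn (hsubβ hy)
  exact ⟨x, ⟨hx.1, (hheight hx).symm.trans_le hy.2⟩, rfl⟩

theorem OrderIso.apply_mem_nonMaxUpTo_iff (e : α ≃o β) {k : ℕ} {x : α} :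
    e x ∈ nonMaxUpTo β k ↔ x ∈ nonMaxUpTo α k := by
  simp only [nonMaxUpTo, mem_ofPred, e.isMax_apply, height_orderIso]

theorem OrderIso.image_nonMaxUpTo (e : α ≃o β) (k : ℕ) : e '' nonMaxUpTo α k = nonMaxUpTo β k := by
  ext y
  rw [e.image_eq_preimage_symm, mem_preimage, ← e.apply_mem_nonMaxUpTo_iff, e.apply_symm_apply]

section LowerSubset

variable {T : Set α} (hT : IsLowerSet T)
include hT

theorem IsLowerSet.coe_mem_nonMaxUpTo {k : ℕ} {x : T} (hx : x ∈ nonMaxUpTo T k) :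
    (x : α) ∈ nonMaxUpTo α k :=
  ⟨fun hmax => hx.1 fun _ hb => hmax hb, (height_coe_of_isLowerSet hT x).trans_le hx.2⟩

theorem IsLowerSet.mem_nonMaxUpTo_of_lt {k : ℕ} {x y : T} (hx : (x : α) ∈ nonMaxUpTo α k)
    (hxy : x < y) : x ∈ nonMaxUpTo T k :=
  ⟨not_isMax_of_lt hxy, (height_coe_of_isLowerSet hT x).symm.trans_le hx.2⟩

theorem IsLowerSet.mem_image_val_nonMaxUpTo {k : ℕ} {x y : α} (hx : x ∈ nonMaxUpTo α k)
    (hy : y ∈ T) (hxy : x < y) : x ∈ Subtype.val '' nonMaxUpTo T k :=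
  ⟨⟨x, hT hxy.le hy⟩, hT.mem_nonMaxUpTo_of_lt hx (y := ⟨y, hy⟩) hxy, rfl⟩

end LowerSubset

namespace IsOrderIsoOn

variable {f : α → β} {s : Set α} {t : Set β}

/-- The covering hypothesis makes `f` map `nonMaxUpTo α k` into `nonMaxUpTo β k`; the size bound
makes it onto. -/
theorem nonMaxUpTo_of_cover (h : IsOrderIsoOn f s t) (hs : IsLowerSet s) (ht : IsLowerSet t) {k : ℕ}
    (hcov : ∀ x ∈ nonMaxUpTo α k, ∃ y ∈ s, x < y) (hfin : (nonMaxUpTo β k).Finite)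
    (hcard : (nonMaxUpTo β k).encard ≤ (nonMaxUpTo α k).encard) :
    IsOrderIsoOn f (nonMaxUpTo α k) (nonMaxUpTo β k) := by
  have hs_eq : Subtype.val '' nonMaxUpTo s k = nonMaxUpTo α k := by
    refine Subset.antisymm (image_subset_iff.mpr fun x hx => hs.coe_mem_nonMaxUpTo hx)
      fun x hx => ?_
    obtain ⟨y, hy, hxy⟩ := hcov x hx
    exact hs.mem_image_val_nonMaxUpTo hx hy hxy
  have hsub : nonMaxUpTo α k ⊆ s := hs_eq ▸ Subtype.coe_image_subset _ _
  have himg : f '' nonMaxUpTo α k ⊆ nonMaxUpTo β k := by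
    rw [← hs_eq, image_image]
    rintro _ ⟨x, hx, rfl⟩
    exact ht.coe_mem_nonMaxUpTo (h.orderIso.apply_mem_nonMaxUpTo_iff.mpr hx)
  rw [← hfin.eq_of_subset_of_encard_le' himg (by rwa [(h.1.injOn.mono hsub).encard_image])]
  exact h.subset hsub

end IsOrderIsoOn

def StemsSubset (α β : Type*) [PartialOrder α] [PartialOrder β] : Prop :=
  ∀ T : Set α, T.Finite → IsLowerSet T → ∃ F : Set β, IsLowerSet F ∧ Nonempty (T ≃o F)

theorem StemsSubset.nonempty (hα : ∀ x : α, (Iic x).Finite) (h : StemsSubset α β) (x : α) :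
    Nonempty β := by
  obtain ⟨F, -, ⟨e⟩⟩ := h _ (hα x) (isLowerSet_Iic x)
  exact ⟨e ⟨x, le_rfl⟩⟩

theorem OrderIso.exists_isOrderIsoOn [Nonempty β] {T : Set α} {F : Set β} (e : T ≃o F) :
    ∃ f : α → β, IsOrderIsoOn f T F := by
  obtain ⟨f, hf, hfe⟩ := e.toEquiv.exists_bijOn
  refine ⟨f, hf, fun x hx y hy => ?_⟩
  rw [hfe ⟨x, hx⟩, hfe ⟨y, hy⟩]
  exact e.le_iff_le

theorem exists_finite_isLowerSet_cover (hα : ∀ x : α, (Iic x).Finite) {S A : Set α}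
    (hS : S.Finite) (hA : A.Finite) (hSmax : ∀ x ∈ S, ¬IsMax x) :
    ∃ T : Set α, T.Finite ∧ IsLowerSet T ∧ A ⊆ T ∧ ∀ x ∈ S, ∃ y ∈ T, x < y := by
  choose up hup using fun x : S => not_isMax_iff.mp (hSmax x x.2)
  have := hS.to_subtype
  refine ⟨⋃ a ∈ A ∪ range up, Iic a, (hA.union (finite_range up)).biUnion fun a _ => hα a,
    isLowerSet_iUnion₂ fun a _ => isLowerSet_Iic a,
    fun a ha => mem_biUnion (Or.inl ha) le_rfl, fun x hx => ?_⟩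
  exact ⟨up ⟨x, hx⟩, mem_biUnion (Or.inr (mem_range_self _)) le_rfl, hup ⟨x, hx⟩⟩

theorem encard_nonMaxUpTo_le (hβ : ∀ y : β, (Iic y).Finite) (h : StemsSubset β α) (k : ℕ) :
    (nonMaxUpTo β k).encard ≤ (nonMaxUpTo α k).encard := by
  refine ENat.forall_natCast_le_iff_le.mp fun n hn => ?_
  obtain ⟨X, hXs, hXn⟩ := exists_subset_encard_eq hn
  obtain ⟨T, hTfin, hT, -, hcov⟩ := exists_finite_isLowerSet_cover hβ
    (finite_of_encard_eq_coe hXn) finite_empty fun x hx => (hXs hx).1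
  obtain ⟨F, hF, ⟨e⟩⟩ := h T hTfin hT
  calc (n : ℕ∞) = X.encard := hXn.symm
    _ ≤ (Subtype.val '' nonMaxUpTo T k).encard := encard_le_encard fun x hx => by
      obtain ⟨y, hy, hxy⟩ := hcov x hx
      exact hT.mem_image_val_nonMaxUpTo (hXs hx) hy hxy
    _ = (Subtype.val '' nonMaxUpTo F k).encard := by
      simp only [Subtype.val_injective.encard_image, ← e.image_nonMaxUpTo,
        e.injective.encard_image]
    _ ≤ (nonMaxUpTo α k).encard :=
      encard_le_encard (image_subset_iff.mpr fun _ hx => hF.coe_mem_nonMaxUpTo hx)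

end Posets

section Matching

variable {α β : Type*} [PartialOrder α] [PartialOrder β]

def maxOver (P : Set α) : Set α := {x | IsMax x ∧ Iio x = P}

/-- Multiplicities of maximal elements are truncated at `k` so that a finite stem can witness them;
they become exact in the limit (`encard_maxOver_image_of_forall_matchesUpTo`). -/
def MatchesUpTo (k : ℕ) (f : α → β) : Prop :=
  IsOrderIsoOn f (nonMaxUpTo α k) (nonMaxUpTo β k) ∧
    ∀ P ⊆ nonMaxUpTo α k, min (k : ℕ∞) (maxOver (f '' P)).encard = min (k : ℕ∞) (maxOver P).encard

theorem MatchesUpTo.of_le {k m : ℕ} {f : α → β} (h : MatchesUpTo m f) (hkm : k ≤ m) :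
    MatchesUpTo k f := by
  refine ⟨h.1.nonMaxUpTo_of_le hkm, fun P hP => ?_⟩
  have := congrArg (min (k : ℕ∞)) (h.2 P (hP.trans (nonMaxUpTo_mono hkm)))
  rwa [← min_assoc, ← min_assoc, min_eq_left (Nat.cast_le.mpr hkm)] at this

theorem MatchesUpTo.congr {k : ℕ} {f g : α → β} (h : MatchesUpTo k f)
    (hfg : EqOn f g (nonMaxUpTo α k)) : MatchesUpTo k g :=
  ⟨h.1.congr hfg, fun P hP => by rw [← (hfg.mono hP).image_eq]; exact h.2 P hP⟩

/-- `f x` is maximal: everything below it lies in `f '' Iio x ⊆ nonMaxUpTo β k`, so otherwise it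
would lie in `nonMaxUpTo β (k + 1)`, which `f` reaches only from non-maximal elements. -/
theorem IsOrderIsoOn.mem_maxOver_image {f : α → β} {s : Set α} {t : Set β}
    (hf : IsOrderIsoOn f s t) (hs : IsLowerSet s) (ht : IsLowerSet t) {k : ℕ}
    (hf₁ : IsOrderIsoOn f (nonMaxUpTo α (k + 1)) (nonMaxUpTo β (k + 1)))
    (hsub : nonMaxUpTo α (k + 1) ⊆ s) {x : α} (hxs : x ∈ s) (hx : IsMax x)
    (hxk : Iio x ⊆ nonMaxUpTo α k) : f x ∈ maxOver (f '' Iio x) := by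
  have hIio : Iio (f x) = f '' Iio x := (hf.image_Iio hs ht hxs).symm
  refine ⟨by_contra fun hnm => ?_, hIio⟩
  have hfx : f x ∈ nonMaxUpTo β (k + 1) := ⟨hnm, height_le_coe_iff.mpr fun y hy => by
    obtain ⟨p, hp, rfl⟩ := (hIio ▸ hy : y ∈ f '' Iio x)
    exact ((hf₁.nonMaxUpTo_of_le k.le_succ).1.mapsTo (hxk hp)).2.trans_lt
      (by exact_mod_cast k.lt_succ_self)⟩
  obtain ⟨z, hz, hzx⟩ := hf₁.1.surjOn hfx
  obtain rfl : z = x := hf.1.injOn (hsub hz) hxs hzx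
  exact hz.1 hx

/-- The witness stem contains a strict upper bound of each element of `nonMaxUpTo α (k + 1)` and
up to `k` maximal elements over each `P ⊆ nonMaxUpTo α k`. -/
theorem exists_isOrderIsoOn_min_encard_maxOver_le [Nonempty β] (hα : ∀ x : α, (Iic x).Finite)
    (h : StemsSubset α β) {k : ℕ} (hfinα : (nonMaxUpTo α (k + 1)).Finite)
    (hfinβ : (nonMaxUpTo β (k + 1)).Finite)
    (hcard : (nonMaxUpTo β (k + 1)).encard ≤ (nonMaxUpTo α (k + 1)).encard) :
    ∃ f : α → β, IsOrderIsoOn f (nonMaxUpTo α k) (nonMaxUpTo β k) ∧ ∀ P ⊆ nonMaxUpTo α k,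
      min (k : ℕ∞) (maxOver P).encard ≤ min (k : ℕ∞) (maxOver (f '' P)).encard := by
  choose W hWsub hWcard using fun P : Set α =>
    exists_subset_encard_eq (min_le_right (k : ℕ∞) (maxOver P).encard)
  have hWfin (P : Set α) : (W P).Finite :=
    finite_of_encard_le_coe ((hWcard P).trans_le (min_le_left _ _))
  obtain ⟨T, hTfin, hT, hWT, hcov⟩ := exists_finite_isLowerSet_cover hα hfinα
    ((hfinα.subset (nonMaxUpTo_mono k.le_succ)).finite_subsets.biUnion fun P _ => hWfin P)
    fun x hx => hx.1
  obtain ⟨F, hF, ⟨e⟩⟩ := h T hTfin hT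
  obtain ⟨f, hf⟩ := e.exists_isOrderIsoOn
  have hf₁ := hf.nonMaxUpTo_of_cover hT hF hcov hfinβ hcard
  have hsubT : nonMaxUpTo α (k + 1) ⊆ T := fun z hz =>
    let ⟨_, hy, hzy⟩ := hcov z hz
    hT hzy.le hy
  refine ⟨f, hf₁.nonMaxUpTo_of_le k.le_succ, fun P hP => ?_⟩
  have hWPT : W P ⊆ T := fun x hx => hWT (mem_biUnion hP hx)
  have hmaps : MapsTo f (W P) (maxOver (f '' P)) := fun x hx => by
    obtain ⟨hxmax, rfl⟩ := hWsub P hx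
    exact hf.mem_maxOver_image hT hF hf₁ hsubT (hWPT hx) hxmax hP
  refine le_min (min_le_left _ _) ?_
  calc min (k : ℕ∞) (maxOver P).encard = (W P).encard := (hWcard P).symm
    _ = (f '' W P).encard := ((hf.1.injOn.mono hWPT).encard_image).symm
    _ ≤ (maxOver (f '' P)).encard := encard_le_encard hmaps.image_subset

section
variable [Nonempty α] [Nonempty β] (hα : ∀ x : α, (Iic x).Finite) (hβ : ∀ y : β, (Iic y).Finite)
  (hαβ : StemsSubset α β) (hβα : StemsSubset β α) (hfinα : ∀ k, (nonMaxUpTo α k).Finite)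
  (hfinβ : ∀ k, (nonMaxUpTo β k).Finite)
  (hcard : ∀ k, (nonMaxUpTo β k).encard = (nonMaxUpTo α k).encard)
include hα hβ hαβ hβα hfinα hfinβ hcard

theorem exists_matchesUpTo (k : ℕ) : ∃ f : α → β, MatchesUpTo k f := by
  obtain ⟨f, hf, hfP⟩ := exists_isOrderIsoOn_min_encard_maxOver_le hα hαβ (hfinα (k + 1))
    (hfinβ (k + 1)) (hcard (k + 1)).le
  obtain ⟨g, hg, hgQ⟩ := exists_isOrderIsoOn_min_encard_maxOver_le hβ hβα (hfinβ (k + 1))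
    (hfinα (k + 1)) (hcard (k + 1)).ge
  exact ⟨f, hf, fun P hP => eq_of_le_image_of_le_image (hfinα k) hf.1.mapsTo hg.1.mapsTo
    hf.1.injOn hg.1.injOn (d := fun P => min (k : ℕ∞) (maxOver P).encard)
    (d' := fun Q => min (k : ℕ∞) (maxOver Q).encard) hfP hgQ hP⟩

theorem exists_forall_matchesUpTo : ∃ φ : α → β, ∀ k, MatchesUpTo k φ :=
  exists_forall_of_inverseSystem hfinα hfinβ (fun _ _ h => h.1.1.mapsTo)
    (fun _ _ _ hkm h => h.of_le hkm) nonMaxUpTo_mono (fun _ _ _ h hfg => h.congr hfg)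
    (exists_matchesUpTo hα hβ hαβ hβα hfinα hfinβ hcard)

end

end Matching

section Extension

variable {α β : Type*} [PartialOrder α] [PartialOrder β]

open Classical in
noncomputable def extendToMax (φ : α → β) (ψ : Set α → α → β) (x : α) : β :=
  if IsMax x then ψ (Iio x) x else φ x

variable (hα : ∀ x : α, (Iic x).Finite) {φ : α → β}
  (hφ : IsOrderIsoOn φ {x | ¬IsMax x} {y | ¬IsMax y}) {ψ : Set α → α → β}
  (hψ : ∀ P ⊆ {x | ¬IsMax x}, P.Finite → BijOn (ψ P) (maxOver P) (maxOver (φ '' P)))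

omit [PartialOrder β] in
theorem extendToMax_of_not_isMax {x : α} (hx : ¬IsMax x) : extendToMax φ ψ x = φ x := if_neg hx

include hα hψ in
theorem extendToMax_mem_maxOver {x : α} (hx : IsMax x) :
    extendToMax φ ψ x ∈ maxOver (φ '' Iio x) := by
  rw [extendToMax, if_pos hx]
  exact (hψ _ (fun _ hy => not_isMax_of_lt hy) ((hα x).subset Iio_subset_Iic_self)).mapsTo ⟨hx, rfl⟩

include hα hφ hψ in
theorem bijOn_extendToMax_isMax (hβ : ∀ y : β, (Iic y).Finite) :
    BijOn (extendToMax φ ψ) {x | IsMax x} {y | IsMax y} := by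
  have hIio (x : α) : Iio x ⊆ {x | ¬IsMax x} := fun _ hy => not_isMax_of_lt hy
  refine ⟨fun x hx => (extendToMax_mem_maxOver hα hψ hx).1,
    fun x (hx : IsMax x) y (hy : IsMax y) hxy => ?_, fun y (hy : IsMax y) => ?_⟩
  · have hxy' : Iio x = Iio y := by
      rw [← hφ.1.injOn.image_eq_image_iff (hIio x) (hIio y), ← (extendToMax_mem_maxOver hα hψ hx).2,
        ← (extendToMax_mem_maxOver hα hψ hy).2, hxy]
    rw [extendToMax, extendToMax, if_pos hx, if_pos hy, ← hxy'] at hxy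
    exact (hψ _ (hIio x) ((hα x).subset Iio_subset_Iic_self)).injOn ⟨hx, rfl⟩ ⟨hy, hxy'.symm⟩ hxy
  · set P := {x | ¬IsMax x} ∩ φ ⁻¹' Iio y
    have hP : φ '' P = Iio y := by
      rw [image_inter_preimage, hφ.1.image_eq]
      exact inter_eq_right.mpr fun z hz => not_isMax_of_lt hz
    have hPfin : P.Finite := Finite.of_finite_image (hP ▸ (hβ y).subset Iio_subset_Iic_self)
      (hφ.1.injOn.mono inter_subset_left)
    obtain ⟨x, hx, hxy⟩ := (hψ P inter_subset_left hPfin).surjOn ⟨hy, hP.symm⟩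
    refine ⟨x, hx.1, ?_⟩
    rw [extendToMax, if_pos hx.1, hx.2, hxy]

include hα hφ hψ in
theorem bijective_extendToMax (hβ : ∀ y : β, (Iic y).Finite) :
    Bijective (extendToMax φ ψ) := by
  have hN : BijOn (extendToMax φ ψ) {x | ¬IsMax x} {y | ¬IsMax y} :=
    hφ.1.congr fun x hx => (extendToMax_of_not_isMax hx).symm
  have hM := bijOn_extendToMax_isMax hα hφ hψ hβ
  simpa only [← compl_ofPred, compl_union_self, bijOn_univ] using
    hN.union hM ((injOn_union (disjoint_left.mpr fun x (hx : ¬IsMax x) hx' => hx hx')).mpr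
      ⟨hN.injOn, hM.injOn, fun x hx y hy h => hN.mapsTo hx (h ▸ hM.mapsTo hy)⟩)

include hα hφ hψ in
theorem extendToMax_le_extendToMax_iff (hβ : ∀ y : β, (Iic y).Finite) {x y : α} :
    extendToMax φ ψ x ≤ extendToMax φ ψ y ↔ x ≤ y := by
  by_cases hx : IsMax x
  · have hex := (extendToMax_mem_maxOver hα hψ hx).1
    calc extendToMax φ ψ x ≤ extendToMax φ ψ y ↔ extendToMax φ ψ x = extendToMax φ ψ y :=
          ⟨hex.eq_of_le, fun h => h.le⟩
      _ ↔ x = y := (bijective_extendToMax hα hφ hψ hβ).injective.eq_iff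
      _ ↔ x ≤ y := ⟨fun h => h.le, hx.eq_of_le⟩
  by_cases hy : IsMax y
  · have hey := extendToMax_mem_maxOver hα hψ hy
    have hne : φ x ≠ extendToMax φ ψ y := fun h => hφ.1.mapsTo hx (h ▸ hey.1)
    have hne' : x ≠ y := fun h => hx (h ▸ hy)
    rw [extendToMax_of_not_isMax hx, hne.le_iff_lt, hne'.le_iff_lt, ← mem_Iio, hey.2,
      hφ.1.injOn.mem_image_iff (fun _ hz => not_isMax_of_lt (mem_Iio.mp hz)) hx, mem_Iio]
  · rw [extendToMax_of_not_isMax hx, extendToMax_of_not_isMax hy]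
    exact hφ.2 hx hy

end Extension

section Assembly

variable {α β : Type*} [PartialOrder α] [PartialOrder β] (hα : ∀ x : α, (Iic x).Finite)
  (hβ : ∀ y : β, (Iic y).Finite)
include hα hβ

theorem nonempty_orderIso_of_isOrderIsoOn_nonMax [Countable α] [Countable β] [Nonempty β]
    {φ : α → β} (hφ : IsOrderIsoOn φ {x | ¬IsMax x} {y | ¬IsMax y})
    (hmax : ∀ P ⊆ {x | ¬IsMax x}, P.Finite → (maxOver (φ '' P)).encard = (maxOver P).encard) :
    Nonempty (α ≃o β) := by
  have hfib (P : Set α) : ∃ ψ : α → β, P ⊆ {x | ¬IsMax x} → P.Finite →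
      BijOn ψ (maxOver P) (maxOver (φ '' P)) := by
    by_cases hP : P ⊆ {x | ¬IsMax x} ∧ P.Finite
    · obtain ⟨e⟩ := nonempty_equiv_of_encard_eq (hmax P hP.1 hP.2).symm
      obtain ⟨ψ, hψ, -⟩ := e.exists_bijOn
      exact ⟨ψ, fun _ _ => hψ⟩
    · exact ⟨φ, fun h₁ h₂ => absurd ⟨h₁, h₂⟩ hP⟩
  choose ψ hψ using hfib
  exact ⟨{ toEquiv := Equiv.ofBijective _ (bijective_extendToMax hα hφ hψ hβ)
           map_rel_iff' := extendToMax_le_extendToMax_iff hα hφ hψ hβ }⟩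

theorem isOrderIsoOn_nonMax_of_forall_matchesUpTo {φ : α → β} (hφ : ∀ k, MatchesUpTo k φ) :
    IsOrderIsoOn φ {x | ¬IsMax x} {y | ¬IsMax y} := by
  have := IsOrderIsoOn.iUnion nonMaxUpTo_mono fun k => (hφ k).1
  rwa [iUnion_nonMaxUpTo fun x => height_lt_top_of_finite_Iic (hα x),
    iUnion_nonMaxUpTo fun y => height_lt_top_of_finite_Iic (hβ y)] at this

omit hβ in
theorem encard_maxOver_image_of_forall_matchesUpTo {φ : α → β} (hφ : ∀ k, MatchesUpTo k φ)
    {P : Set α} (hP : P ⊆ {x | ¬IsMax x}) (hPfin : P.Finite) :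
    (maxOver (φ '' P)).encard = (maxOver P).encard := by
  obtain ⟨k, hk⟩ := nonMaxUpTo_mono.directed_le.exists_mem_subset_of_finset_subset_biUnion
    (s := hPfin.toFinset) (by
      rwa [hPfin.coe_toFinset, iUnion_nonMaxUpTo fun x => height_lt_top_of_finite_Iic (hα x)])
  rw [hPfin.coe_toFinset] at hk
  exact ENat.eq_of_forall_ge_min_eq fun m hkm => (hφ m).2 P (hk.trans (nonMaxUpTo_mono hkm))

theorem nonempty_orderIso_of_stemsSubset [Countable α] [Countable β] (hαβ : StemsSubset α β)
    (hβα : StemsSubset β α) (hfin : ∀ k, (nonMaxUpTo α k).Finite) : Nonempty (α ≃o β) := by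
  rcases isEmpty_or_nonempty α with hα₀ | hα₀
  · have : IsEmpty β := ⟨fun y => isEmptyElim (hβα.nonempty hβ y).some⟩
    exact ⟨OrderIso.ofIsEmpty α β⟩
  have := hαβ.nonempty hα hα₀.some
  have hcard (k : ℕ) : (nonMaxUpTo β k).encard = (nonMaxUpTo α k).encard :=
    le_antisymm (encard_nonMaxUpTo_le hβ hβα k) (encard_nonMaxUpTo_le hα hαβ k)
  have hfinβ (k : ℕ) : (nonMaxUpTo β k).Finite :=
    encard_lt_top_iff.mp ((hcard k).trans_lt (hfin k).encard_lt_top)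
  obtain ⟨φ, hφ⟩ := exists_forall_matchesUpTo hα hβ hαβ hβα hfin hfinβ hcard
  exact nonempty_orderIso_of_isOrderIsoOn_nonMax hα hβ
    (isOrderIsoOn_nonMax_of_forall_matchesUpTo hα hβ hφ)
    fun P hP hPfin => encard_maxOver_image_of_forall_matchesUpTo hα hφ hP hPfin

end Assembly

section Relations

abbrev partialOrderOfIsPartialOrder {α : Type*} (le : α → α → Prop) (h : IsPartialOrder α le) :
    PartialOrder α where
  le := le
  le_refl := h.refl
  le_trans := h.trans
  le_antisymm := h.antisymm

theorem SameStems.symm {α β : Type} {le₁ : α → α → Prop} {le₂ : β → β → Prop}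
    (h : SameStems le₁ le₂) : SameStems le₂ le₁ :=
  fun n s => (h n s).symm

variable {α : Type} [PartialOrder α]

theorem chainTo_iff {x : α} {k : ℕ} :
    ChainTo (· ≤ ·) x k ↔ ∃ p : LTSeries α, p.length = k ∧ p.last = x := by
  constructor
  · rintro ⟨f, hf, rfl⟩
    exact ⟨⟨k, f, fun i => lt_iff_le_and_ne.mpr (hf _ _ (Fin.castSucc_lt_succ (i := i)))⟩, rfl, rfl⟩
  · rintro ⟨p, rfl, rfl⟩
    exact ⟨p, fun i j hij => lt_iff_le_and_ne.mp (p.strictMono hij), rfl⟩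

theorem hasLevel_iff {x : α} {k : ℕ} : HasLevel (· ≤ ·) x k ↔ height x = k := by
  refine ⟨fun ⟨hk, hmax⟩ => le_antisymm (height_le fun p hp => ?_) ?_,
    fun h => ⟨?_, fun m hm => ?_⟩⟩
  · exact_mod_cast hmax _ (chainTo_iff.mpr ⟨p, rfl, hp⟩)
  · obtain ⟨p, rfl, rfl⟩ := chainTo_iff.mp hk
    exact length_le_height_last
  · obtain ⟨p, hp, hpk⟩ := exists_series_of_height_eq_coe x h
    exact chainTo_iff.mpr ⟨p, hpk, hp⟩
  · obtain ⟨p, rfl, rfl⟩ := chainTo_iff.mp hm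
    exact_mod_cast length_le_height_last.trans h.le

theorem isMaximalRel_iff {x : α} : IsMaximalRel (· ≤ ·) x ↔ IsMax x :=
  ⟨fun h _ hb => (h _ hb).le, fun h _ hy => (h.eq_of_le hy).symm⟩

theorem finite_nonMaxUpTo
    (hfin : ∀ k : ℕ, {x : α | HasLevel (· ≤ ·) x k ∧ ¬IsMaximalRel (· ≤ ·) x}.Finite) (k : ℕ) :
    (nonMaxUpTo α k).Finite := by
  refine ((finite_le_nat k).biUnion fun j _ => hfin j).subset fun x ⟨hx, hxk⟩ => ?_
  obtain ⟨j, hj, hjk⟩ := ENat.le_natCast_iff.mp hxk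
  exact mem_biUnion hjk ⟨hasLevel_iff.mpr hj, isMaximalRel_iff.not.mpr hx⟩

theorem SameStems.stemsSubset {β : Type} [PartialOrder β]
    (h : SameStems (α := α) (β := β) (· ≤ ·) (· ≤ ·)) : StemsSubset α β := by
  intro T hT hTl
  have := hT.fintype
  let e := Fintype.equivFin T
  obtain ⟨u, hu, hule, hulow⟩ := (h _ fun i j => e.symm i ≤ e.symm j).mp
    ⟨fun i => e.symm i, Subtype.val_injective.comp e.symm.injective, fun i j => Iff.rfl,
      fun x j hx => ⟨e ⟨x, hTl hx (e.symm j).2⟩, by simp⟩⟩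
  refine ⟨range u, fun y z hzy hy => ?_,
    ⟨{ toEquiv := e.trans (Equiv.ofInjective u hu), map_rel_iff' := @fun a b => ?_ }⟩⟩
  · obtain ⟨j, rfl⟩ := hy
    exact mem_range.mpr (hulow z j hzy)
  · simpa [← Subtype.coe_le_coe] using (hule (e a) (e b)).symm

end Relations

/-- **Θ ⊆ Γ**: Let `a` and `b` be countable past-finite partial orders having the same
stems. If every level of `a` contains only finitely many non-maximal elements, then
`a` and `b` are order-isomorphic. -/
theorem theta_subset_gamma (α β : Type) (leA : α → α → Prop) (leB : β → β → Prop)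
    (hpoA : IsPartialOrder α leA) (hpoB : IsPartialOrder β leB)
    (hcA : Countable α) (hcB : Countable β)
    (hpfA : PastFinite leA) (hpfB : PastFinite leB)
    (hstems : SameStems leA leB)
    (hfin : ∀ k : ℕ, {x : α | HasLevel leA x k ∧ ¬ IsMaximalRel leA x}.Finite) :
    OrderIsoRel leA leB := by
  let := partialOrderOfIsPartialOrder leA hpoA
  let := partialOrderOfIsPartialOrder leB hpoB
  obtain ⟨e⟩ := nonempty_orderIso_of_stemsSubset hpfA hpfB hstems.stemsSubset
    hstems.symm.stemsSubset (finite_nonMaxUpTo hfin)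
  exact ⟨e.toEquiv, fun x y => e.le_iff_le.symm⟩
end

section
/- The set of r ∈ Ω̃ such that the poset (ℕ, r) has a level containing infinitely many non-maximal elements belongs to the σ-algebra on Ω̃ generated by the family of all stem sets. (Lemma: Θ is measurable; indeed Θ ∈ R(S).) -/
open MeasureTheory

/-- Ω̃: the completed labeled causets, modelled as the transitive natural relations on ℕ,
viewed as a subset of the product space `(ℕ × ℕ) → Bool`. -/
def OmegaT : Set ((ℕ × ℕ) → Bool) :=
  {r | (∀ x y z : ℕ, r (x, y) = true → r (y, z) = true → r (x, z) = true) ∧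
       (∀ x y : ℕ, r (x, y) = true → x < y)}

/-- The partial order `≤` on ℕ determined by `r ∈ Ω̃` (the reflexive closure of `r`). -/
def leOf (r : OmegaT) (x y : ℕ) : Prop := x = y ∨ (r : (ℕ × ℕ) → Bool) (x, y) = true

/-- The stem set of a finite poset `s` on `Fin n`:
`stem(s) = {r ∈ Ω̃ : s is a stem in the poset (ℕ, r)}`. -/
def stemSet (n : ℕ) (s : Fin n → Fin n → Prop) : Set OmegaT :=
  {r | IsStemIn s (leOf r)}

/-- The family of all stem sets (where `s` ranges over finite partial orders). -/
def stemFamily : Set (Set OmegaT) :=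
  {S | ∃ (n : ℕ) (s : Fin n → Fin n → Prop), IsPartialOrder (Fin n) s ∧ S = stemSet n s}

/-- The cylinder set of a relation `s` on `{0,…,n-1}`: the relations in Ω̃ whose
restriction to `{0,…,n-1}` equals `s`. -/
def cyl (n : ℕ) (s : Fin n → Fin n → Bool) : Set OmegaT :=
  {r | ∀ i j : Fin n, (r : (ℕ × ℕ) → Bool) ((i : ℕ), (j : ℕ)) = s i j}

/-- `s` is a transitive natural relation on `{0,…,n-1}`. -/
def IsFinCauset (n : ℕ) (s : Fin n → Fin n → Bool) : Prop :=
  (∀ i j k : Fin n, s i j = true → s j k = true → s i k = true) ∧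
  (∀ i j : Fin n, s i j = true → (i : ℕ) < (j : ℕ))

/-- The family of all cylinder sets. -/
def cylFamily : Set (Set OmegaT) :=
  {C | ∃ (n : ℕ) (s : Fin n → Fin n → Bool), IsFinCauset n s ∧ C = cyl n s}

/-- A subset of Ω̃ is invariant under order-isomorphism (i.e. covariant). -/
def IsoInvariant (A : Set OmegaT) : Prop :=
  ∀ r₁ r₂ : OmegaT, OrderIsoRel (leOf r₁) (leOf r₂) → r₁ ∈ A → r₂ ∈ A

/-- Θ̃: the set of `r ∈ Ω̃` whose poset `(ℕ, r)` is rogue. -/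
def ThetaT : Set OmegaT := {r | IsRogueRel (leOf r)}

section Aux

lemma leOf_refl (r : OmegaT) (x : ℕ) : leOf r x x := Or.inl rfl

lemma leOf_trans (r : OmegaT) {x y z : ℕ} (h1 : leOf r x y) (h2 : leOf r y z) :
    leOf r x z := by
  rcases h1 with rfl | h1
  · exact h2
  · rcases h2 with rfl | h2
    · exact Or.inr h1
    · exact Or.inr (r.2.1 x y z h1 h2)

lemma leOf_le (r : OmegaT) {x y : ℕ} (h : leOf r x y) : x ≤ y := by
  rcases h with rfl | h
  · exact le_rfl
  · exact (r.2.2 x y h).le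

lemma leOf_antisymm (r : OmegaT) {x y : ℕ} (h1 : leOf r x y) (h2 : leOf r y x) :
    x = y := le_antisymm (leOf_le r h1) (leOf_le r h2)

lemma chainTo_transfer {α : Type} {n : ℕ} {s : Fin n → Fin n → Prop} {le : α → α → Prop}
    {f : Fin n → α} (hinj : Function.Injective f)
    (hiff : ∀ i j, s i j ↔ le (f i) (f j))
    (hdown : ∀ x j, le x (f j) → ∃ i, f i = x)
    (i : Fin n) (k : ℕ) : ChainTo s i k ↔ ChainTo le (f i) k := by
  constructor
  · rintro ⟨g, hg, hgl⟩
    refine ⟨f ∘ g, ?_, by simp [hgl]⟩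
    intro a b hab
    obtain ⟨h1, h2⟩ := hg a b hab
    exact ⟨(hiff _ _).1 h1, fun h => h2 (hinj h)⟩
  · rintro ⟨h, hh, hhl⟩
    have hex : ∀ j : Fin (k + 1), ∃ i', f i' = h j := by
      intro j
      rcases eq_or_lt_of_le (Fin.le_last j) with hj | hj
      · exact ⟨i, by rw [← hhl, hj]⟩
      · refine hdown _ i ?_
        have := (hh j (Fin.last k) hj).1
        rwa [hhl] at this
    choose g hg using hex
    refine ⟨g, ?_, ?_⟩
    · intro a b hab
      obtain ⟨h1, h2⟩ := hh a b hab
      refine ⟨(hiff _ _).2 (by rw [hg, hg]; exact h1), fun he => h2 ?_⟩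
      rw [← hg a, ← hg b, he]
    · apply hinj; rw [hg, hhl]

lemma hasLevel_transfer {α : Type} {n : ℕ} {s : Fin n → Fin n → Prop} {le : α → α → Prop}
    {f : Fin n → α} (hinj : Function.Injective f)
    (hiff : ∀ i j, s i j ↔ le (f i) (f j))
    (hdown : ∀ x j, le x (f j) → ∃ i, f i = x)
    (i : Fin n) (k : ℕ) : HasLevel s i k ↔ HasLevel le (f i) k := by
  unfold HasLevel
  simp only [chainTo_transfer hinj hiff hdown]

lemma nonmax_transfer {α : Type} {n : ℕ} {s : Fin n → Fin n → Prop} {le : α → α → Prop}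
    {f : Fin n → α} (hinj : Function.Injective f)
    (hiff : ∀ i j, s i j ↔ le (f i) (f j))
    (i : Fin n) (h : ¬ IsMaximalRel s i) : ¬ IsMaximalRel le (f i) := by
  intro hmax
  apply h
  intro j hij
  exact hinj (hmax (f j) ((hiff _ _).1 hij))

lemma key_iff (r : OmegaT) (k N : ℕ) :
    (∃ t : Finset ℕ, t.card = N ∧
        ∀ x ∈ t, HasLevel (leOf r) x k ∧ ¬ IsMaximalRel (leOf r) x)
    ↔ ∃ p : (n : ℕ) × (Fin n → Fin n → Prop),
        (IsPartialOrder (Fin p.1) p.2 ∧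
          ∃ T : Finset (Fin p.1), T.card = N ∧
            ∀ i ∈ T, HasLevel p.2 i k ∧ ¬ IsMaximalRel p.2 i)
        ∧ r ∈ stemSet p.1 p.2 := by
  constructor
  · rintro ⟨t, htc, htg⟩
    have hY : ∀ x : ℕ, ∃ y, x ∈ t → (leOf r x y ∧ y ≠ x) := by
      intro x
      by_cases hx : x ∈ t
      · have h2 := (htg x hx).2
        unfold IsMaximalRel at h2
        push_neg at h2
        obtain ⟨y, hy1, hy2⟩ := h2
        exact ⟨y, fun _ => ⟨hy1, hy2⟩⟩
      · exact ⟨0, fun h => absurd h hx⟩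
    choose Y hYp using hY
    set D : Set ℕ := {z : ℕ | ∃ x ∈ t, leOf r z (Y x)} with hD
    have hDfin : D.Finite := by
      refine Set.Finite.subset (t.finite_toSet.biUnion
        (fun x _ => Set.finite_Iic (Y x))) ?_
      rintro z ⟨x, hx, hz⟩
      exact Set.mem_biUnion hx (leOf_le r hz)
    have hDdown : ∀ z w, leOf r z w → w ∈ D → z ∈ D := by
      rintro z w hzw ⟨x, hx, hw⟩
      exact ⟨x, hx, leOf_trans r hzw hw⟩
    have htD : ∀ x ∈ t, x ∈ D := fun x hx => ⟨x, hx, (hYp x hx).1⟩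
    have hYD : ∀ x ∈ t, Y x ∈ D := fun x hx => ⟨x, hx, leOf_refl r _⟩
    set F := hDfin.toFinset with hF
    set n := F.card with hn
    set e : Fin n ≃ F := F.equivFin.symm with he
    set f : Fin n → ℕ := fun i => ((e i : F) : ℕ) with hf
    have hfD : ∀ i, f i ∈ D := fun i => hDfin.mem_toFinset.1 (e i).2
    have hfinj : Function.Injective f := fun a b h => e.injective (Subtype.ext h)
    have hmem : ∀ z ∈ D, ∃ i, f i = z := by
      intro z hz
      refine ⟨e.symm ⟨z, hDfin.mem_toFinset.2 hz⟩, ?_⟩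
      simp [hf]
    set s : Fin n → Fin n → Prop := fun i j => leOf r (f i) (f j) with hs
    have hiff : ∀ i j, s i j ↔ leOf r (f i) (f j) := fun _ _ => Iff.rfl
    have hdown : ∀ z j, leOf r z (f j) → ∃ i, f i = z :=
      fun z j h => hmem z (hDdown _ _ h (hfD j))
    have hpo : IsPartialOrder (Fin n) s :=
      { refl := fun i => leOf_refl r _
        trans := fun a b c h1 h2 => leOf_trans r h1 h2
        antisymm := fun a b h1 h2 => hfinj (leOf_antisymm r h1 h2) }
    set T : Finset (Fin n) := t.attach.image
      (fun p => e.symm ⟨p.1, hDfin.mem_toFinset.2 (htD p.1 p.2)⟩) with hT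
    have hfsymm : ∀ (z : ℕ) (hz : z ∈ F), f (e.symm ⟨z, hz⟩) = z := by
      intro z hz; simp [hf]
    have hTcard : T.card = N := by
      rw [hT, Finset.card_image_of_injective, Finset.card_attach, htc]
      intro p q hpq
      have := congrArg f hpq
      rw [hfsymm, hfsymm] at this
      exact Subtype.ext this
    refine ⟨⟨n, s⟩, ⟨hpo, T, hTcard, ?_⟩, f, hfinj, hiff, hdown⟩
    intro i hi
    rw [hT, Finset.mem_image] at hi
    obtain ⟨p, hp, rfl⟩ := hi
    have hfi : f (e.symm ⟨p.1, hDfin.mem_toFinset.2 (htD p.1 p.2)⟩) = p.1 := hfsymm _ _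
    constructor
    · refine (hasLevel_transfer hfinj hiff hdown _ k).2 ?_
      rw [hfi]; exact (htg p.1 p.2).1
    · intro hmax
      obtain ⟨j, hj⟩ := hmem _ (hYD p.1 p.2)
      have hsij : s (e.symm ⟨p.1, hDfin.mem_toFinset.2 (htD p.1 p.2)⟩) j := by
        rw [hiff, hfi, hj]; exact (hYp p.1 p.2).1
      have := hmax j hsij
      apply (hYp p.1 p.2).2
      rw [← hj, this, hfi]
  · rintro ⟨⟨n, s⟩, ⟨hpo, T, hTc, hTg⟩, f, hfinj, hiff, hdown⟩
    refine ⟨T.image f, by rw [Finset.card_image_of_injective _ hfinj, hTc], ?_⟩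
    intro x hx
    rw [Finset.mem_image] at hx
    obtain ⟨i, hi, rfl⟩ := hx
    exact ⟨(hasLevel_transfer hfinj hiff hdown i k).1 (hTg i hi).1,
      nonmax_transfer hfinj hiff i (hTg i hi).2⟩

lemma infinite_iff_finsets {S : Set ℕ} :
    S.Infinite ↔ ∀ N, ∃ t : Finset ℕ, t.card = N ∧ ∀ x ∈ t, x ∈ S := by
  constructor
  · intro h N
    obtain ⟨t, ht1, ht2⟩ := h.exists_subset_card_eq N
    exact ⟨t, ht2, fun x hx => ht1 hx⟩
  · intro h
    by_contra hni
    rw [Set.not_infinite] at hni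
    have hfin := hni
    obtain ⟨t, ht1, ht2⟩ := h (hfin.toFinset.card + 1)
    have hsub : t ⊆ hfin.toFinset := fun x hx => hfin.mem_toFinset.2 (ht2 x hx)
    have := Finset.card_le_card hsub
    omega

end Aux

/-- **Θ is measurable, indeed Θ ∈ R(S)**: the set of `r ∈ Ω̃` such that the poset
`(ℕ, r)` has a level containing infinitely many non-maximal elements belongs to the
σ-algebra generated by the family of all stem sets. -/
theorem gammaSet_mem_stem_sigmaAlgebra :
    MeasurableSet[MeasurableSpace.generateFrom stemFamily]
      {r : OmegaT | ∃ k : ℕ,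
        {x : ℕ | HasLevel (leOf r) x k ∧ ¬ IsMaximalRel (leOf r) x}.Infinite} := by
  have heq : {r : OmegaT | ∃ k : ℕ,
        {x : ℕ | HasLevel (leOf r) x k ∧ ¬ IsMaximalRel (leOf r) x}.Infinite}
      = ⋃ k : ℕ, ⋂ N : ℕ,
          ⋃ p : {p : (n : ℕ) × (Fin n → Fin n → Prop) //
              IsPartialOrder (Fin p.1) p.2 ∧ ∃ T : Finset (Fin p.1), T.card = N ∧
                ∀ i ∈ T, HasLevel p.2 i k ∧ ¬ IsMaximalRel p.2 i},
            stemSet p.1.1 p.1.2 := by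
    ext r
    simp only [Set.mem_setOf_eq, Set.mem_iUnion, Set.mem_iInter]
    apply exists_congr
    intro k
    rw [infinite_iff_finsets]
    simp only [Set.mem_setOf_eq]
    apply forall_congr'
    intro N
    rw [key_iff r k N]
    constructor
    · rintro ⟨p, hp, hmem⟩
      exact ⟨⟨p, hp⟩, hmem⟩
    · rintro ⟨⟨p, hp⟩, hmem⟩
      exact ⟨p, hp, hmem⟩
  rw [heq]
  refine MeasurableSet.iUnion fun k => MeasurableSet.iInter fun N =>
    MeasurableSet.iUnion fun p => ?_
  exact MeasurableSpace.measurableSet_generateFrom ⟨p.1.1, p.1.2, p.2.1, rfl⟩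
end

section
/- Let t : ℕ → ℝ be a sequence of nonnegative reals with t_j > 0 for some j ≥ 2, and let m ≤ ϖ ≤ n₀ be natural numbers. Then the series ∑_{n = n₀+1}^{∞} (∑_{l=m}^{ϖ} binom(ϖ−m, l−m) · t_l) / (∑_{j=0}^{n} binom(n, j) · t_j) converges (its terms are eventually dominated by those of the convergent series ∑ 1/(binom(n,j) t_j)). In particular ∑_{n>n₀} 1/(∑_{j=0}^{n} binom(n,j) t_j) < ∞. -/
private lemma choose_two_le_choose {n k : ℕ} (h2 : 2 ≤ k) (hk : k ≤ n / 2) :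
    n.choose 2 ≤ n.choose k := by
  induction k, h2 using Nat.le_induction with
  | base => exact le_rfl
  | succ k hk2 ih =>
    exact (ih (by omega)).trans (Nat.choose_le_succ_of_lt_half_left (by omega))

private lemma sq_le_four_choose_two {n : ℕ} (hn : 2 ≤ n) : n ^ 2 ≤ 4 * n.choose 2 := by
  have heven : Even (n * (n - 1)) := by
    have := Nat.even_mul_succ_self (n - 1)
    have h1 : n - 1 + 1 = n := by omega
    rw [h1] at this
    exact (Nat.mul_comm (n - 1) n) ▸ this
  have h2 : 2 * n.choose 2 = n * (n - 1) := by
    rw [Nat.choose_two_right, Nat.mul_div_cancel' heven.two_dvd]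
  calc n ^ 2 = n * n := sq n
    _ ≤ n * (2 * (n - 1)) := Nat.mul_le_mul_left n (by omega)
    _ = 2 * (n * (n - 1)) := by ring
    _ = 2 * (2 * n.choose 2) := by rw [h2]
    _ = 4 * n.choose 2 := by ring


open Finset in
/-- Let `t : ℕ → ℝ` be nonnegative with `t j > 0` for some `j ≥ 2`, and `m ≤ ϖ ≤ n₀`.
Then the series of transition probabilities
`∑_{n > n₀} (∑_{l=m}^{ϖ} C(ϖ−m, l−m) t_l) / (∑_{j=0}^{n} C(n, j) t_j)` converges
(summability over all `n` is equivalent since only the terms with `n > n₀` matter and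
the numerator does not depend on `n`); in particular
`∑_{n > n₀} 1 / (∑_{j=0}^{n} C(n, j) t_j) < ∞`. -/
theorem transition_probabilities_summable (t : ℕ → ℝ) (ht : ∀ k, 0 ≤ t k)
    (hj : ∃ j, 2 ≤ j ∧ 0 < t j) (m ϖ n₀ : ℕ) (hmϖ : m ≤ ϖ) (hϖn₀ : ϖ ≤ n₀) :
    Summable (fun n : ℕ =>
      if n₀ < n then
        (∑ l ∈ Finset.Icc m ϖ, ((ϖ - m).choose (l - m) : ℝ) * t l) /
          (∑ j ∈ Finset.range (n + 1), (n.choose j : ℝ) * t j)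
      else 0) ∧
    Summable (fun n : ℕ =>
      if n₀ < n then 1 / (∑ j ∈ Finset.range (n + 1), (n.choose j : ℝ) * t j) else 0) := by
  obtain ⟨j, hj2, hjt⟩ := hj
  set D : ℕ → ℝ := fun n => ∑ i ∈ Finset.range (n + 1), (n.choose i : ℝ) * t i with hDdef
  have hDnonneg : ∀ n, 0 ≤ D n := fun n =>
    Finset.sum_nonneg fun i _ => mul_nonneg (Nat.cast_nonneg _) (ht i)
  have key : Summable (fun n : ℕ => if n₀ < n then 1 / D n else 0) := by
    have hg : Summable (fun n : ℕ => 1 / (n : ℝ) ^ 2) :=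
      Real.summable_one_div_nat_pow.mpr one_lt_two
    apply summable_of_isBigO_nat hg
    apply Asymptotics.IsBigO.of_bound (4 / t j)
    filter_upwards [Filter.eventually_ge_atTop (max (n₀ + 1) (2 * j))] with n hn
    have hcond : n₀ < n := by omega
    have hn2 : 2 ≤ n := by omega
    have hjn : j ≤ n := by omega
    have hhalf : j ≤ n / 2 := by omega
    have hc2 : n.choose 2 ≤ n.choose j := choose_two_le_choose hj2 hhalf
    have hcpos : 0 < n.choose 2 := Nat.choose_pos hn2
    have hDlb : (n.choose 2 : ℝ) * t j ≤ D n := by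
      refine le_trans ?_ (Finset.single_le_sum
        (f := fun i => (n.choose i : ℝ) * t i)
        (fun i _ => mul_nonneg (Nat.cast_nonneg _) (ht i))
        (show j ∈ Finset.range (n+1) from Finset.mem_range.mpr (by omega)))
      exact mul_le_mul_of_nonneg_right (Nat.cast_le.mpr hc2) hjt.le
    have hDpos : 0 < D n :=
      lt_of_lt_of_le (mul_pos (by exact_mod_cast hcpos) hjt) hDlb
    have hnpos : (0 : ℝ) < (n : ℝ) ^ 2 := by positivity
    rw [if_pos hcond]
    rw [Real.norm_eq_abs, Real.norm_eq_abs, abs_of_nonneg (by positivity),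
      abs_of_nonneg (by positivity)]
    have hsq : ((n : ℝ)) ^ 2 ≤ 4 * (n.choose 2 : ℝ) := by
      exact_mod_cast Nat.cast_le.mpr (sq_le_four_choose_two hn2)
    have h1 : (n : ℝ) ^ 2 * t j ≤ 4 * D n := by
      calc (n : ℝ) ^ 2 * t j ≤ 4 * (n.choose 2 : ℝ) * t j :=
            mul_le_mul_of_nonneg_right hsq hjt.le
        _ = 4 * ((n.choose 2 : ℝ) * t j) := by ring
        _ ≤ 4 * D n := by linarith [hDlb]
    rw [mul_one_div, div_le_div_iff₀ hDpos hnpos, one_mul, div_mul_eq_mul_div,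
      le_div_iff₀ hjt]
    linarith [h1]
  refine ⟨?_, key⟩
  have heq : (fun n : ℕ =>
      if n₀ < n then
        (∑ l ∈ Finset.Icc m ϖ, ((ϖ - m).choose (l - m) : ℝ) * t l) / D n
      else 0) =
      fun n : ℕ => (∑ l ∈ Finset.Icc m ϖ, ((ϖ - m).choose (l - m) : ℝ) * t l) *
        (if n₀ < n then 1 / D n else 0) := by
    funext n
    split
    · rw [div_eq_mul_one_div]
    · rw [mul_zero]
  rw [heq]
  exact key.mul_left _
end

section
/- For every Borel subset A of Ω̃ that is invariant under order-isomorphism (i.e., whenever r₁, r₂ ∈ Ω̃ give order-isomorphic posets (ℕ, r₁) ≅ (ℕ, r₂) and r₁ ∈ A, then r₂ ∈ A), there exists a set B in the σ-algebra generated by the stem sets such that the symmetric difference A Δ B is contained in the set Θ̃ of all r ∈ Ω̃ whose poset (ℕ, r) is rogue. (Proposition 2.) -/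
open MeasureTheory

/-!
A stem-measurable map `r ↦ limit r` on Ω̃ with `limit r` having the same stems as `r` suffices:
for `B = limit ⁻¹' A` and `r` not rogue, `r ≅ limit r`, so invariance of `A` gives `r ∈ A ↔ r ∈ B`.

To build `limit r`, enumerate the finite labelled causets (codes) and the finite posets. Grow a
chain of codes, each a natural end-extension of the previous one by at least one element and a
stem of `r`, the `k`-th step also absorbing the `k`-th poset as a stem whenever it is a stem of
`r`; at each step take the code of least index that qualifies. The union of the chain is
`limit r`. Each step only asks which finite posets are stems of `r`, which makes the
construction measurable for the σ-algebra generated by the stem sets.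
-/

open Function

namespace Causet

section Stems

variable {α : Type} {m n : ℕ} {s : Fin n → Fin n → Prop} {le : α → α → Prop}

def IsStemMap (s : Fin n → Fin n → Prop) (le : α → α → Prop) (f : Fin n → α) : Prop :=
  Injective f ∧ (∀ i j, s i j ↔ le (f i) (f j)) ∧ ∀ (x : α) (j : Fin n), le x (f j) → ∃ i, f i = x

theorem isStemIn_iff : IsStemIn s le ↔ ∃ f, IsStemMap s le f := Iff.rfl

theorem IsStemIn.trans {w : Fin m → Fin m → Prop} (h₁ : IsStemIn s w) (h₂ : IsStemIn w le) :
    IsStemIn s le := by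
  obtain ⟨f, hf_inj, hf_rel, hf_down⟩ := h₁
  obtain ⟨g, hg_inj, hg_rel, hg_down⟩ := h₂
  refine ⟨g ∘ f, hg_inj.comp hf_inj, fun i j => (hf_rel i j).trans (hg_rel _ _), fun x j hx => ?_⟩
  obtain ⟨a, rfl⟩ := hg_down x (f j) hx
  obtain ⟨i, rfl⟩ := hf_down a j ((hg_rel a (f j)).2 hx)
  exact ⟨i, rfl⟩

theorem IsStemMap.isStemIn_of_forall_mem_range {w : Fin m → Fin m → Prop} {f : Fin n → α}
    {e : Fin m → α} (hf : IsStemMap s le f) (he : Injective e)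
    (hw : ∀ a b, w a b ↔ le (e a) (e b)) (hfe : ∀ i, ∃ a, e a = f i) : IsStemIn s w := by
  choose φ hφ using hfe
  obtain ⟨hf_inj, hf_rel, hf_down⟩ := hf
  refine ⟨φ, fun i j h => hf_inj (by rw [← hφ i, ← hφ j, h]), fun i j => ?_, fun a j ha => ?_⟩
  · rw [hf_rel, hw, hφ, hφ]
  · obtain ⟨i, hi⟩ := hf_down (e a) j (by rw [← hφ j]; exact (hw a (φ j)).1 ha)
    exact ⟨i, he (by rw [hφ, hi])⟩

theorem IsStemIn.isPartialOrder [IsPartialOrder α le] (h : IsStemIn s le) :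
    IsPartialOrder (Fin n) s := by
  obtain ⟨f, hf_inj, hf_rel, -⟩ := h
  exact RelEmbedding.isPartialOrder ⟨⟨f, hf_inj⟩, fun {i j} => (hf_rel i j).symm⟩

end Stems

theorem OrderIsoRel.symm {α β : Type} {le₁ : α → α → Prop} {le₂ : β → β → Prop}
    (h : OrderIsoRel le₁ le₂) : OrderIsoRel le₂ le₁ := by
  obtain ⟨e, he⟩ := h
  exact ⟨e.symm, fun x y => by rw [he, e.apply_symm_apply, e.apply_symm_apply]⟩

section OmegaT

variable (r : OmegaT) {x y z : ℕ}

theorem rel_trans (hxy : r.1 (x, y) = true) (hyz : r.1 (y, z) = true) : r.1 (x, z) = true :=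
  r.2.1 x y z hxy hyz

theorem lt_of_rel (h : r.1 (x, y) = true) : x < y := r.2.2 x y h

theorem le_of_leOf (h : leOf r x y) : x ≤ y := by
  rcases h with rfl | h
  exacts [le_rfl, (lt_of_rel r h).le]

instance : IsPartialOrder ℕ (leOf r) where
  refl _ := Or.inl rfl
  trans _ _ _ := by
    rintro (rfl | hxy) (rfl | hyz)
    exacts [Or.inl rfl, Or.inr hyz, Or.inr hxy, Or.inr (rel_trans r hxy hyz)]
  antisymm _ _ hxy hyx := (le_of_leOf r hxy).antisymm (le_of_leOf r hyx)

theorem pastFinite_leOf : PastFinite (leOf r) := fun x =>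
  (Set.finite_le_nat x).subset fun _ => le_of_leOf r

end OmegaT

structure Code where
  size : ℕ
  rel : Fin size → Fin size → Bool

namespace Code

instance : Countable Code :=
  Injective.countable (f := fun c : Code => (⟨c.size, c.rel⟩ : Σ n, Fin n → Fin n → Bool))
    (by rintro ⟨⟩ ⟨⟩ h; cases h; rfl)

instance : Inhabited Code := ⟨⟨0, Fin.elim0⟩⟩

def le (c : Code) (i j : Fin c.size) : Prop := i = j ∨ c.rel i j = true

def IsCauset (c : Code) : Prop := IsFinCauset c.size c.rel

def entry (c : Code) (i j : ℕ) : Bool :=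
  if h : i < c.size ∧ j < c.size then c.rel ⟨i, h.1⟩ ⟨j, h.2⟩ else false

theorem entry_of_lt (c : Code) {i j : ℕ} (hi : i < c.size) (hj : j < c.size) :
    c.entry i j = c.rel ⟨i, hi⟩ ⟨j, hj⟩ :=
  dif_pos ⟨hi, hj⟩

theorem entry_val (c : Code) (i j : Fin c.size) : c.entry i j = c.rel i j :=
  c.entry_of_lt i.2 j.2

def Extends (d c : Code) : Prop :=
  c.size ≤ d.size ∧ ∀ i j, i < c.size → j < c.size → d.entry i j = c.entry i j

theorem Extends.refl (c : Code) : c.Extends c := ⟨le_rfl, fun _ _ _ _ => rfl⟩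

theorem Extends.trans {c d e : Code} (hed : e.Extends d) (hdc : d.Extends c) : e.Extends c :=
  ⟨hdc.1.trans hed.1, fun i j hi hj =>
    (hed.2 i j (hi.trans_le hdc.1) (hj.trans_le hdc.1)).trans (hdc.2 i j hi hj)⟩

def ofMap (r : OmegaT) {m : ℕ} (e : Fin m → ℕ) : Code := ⟨m, fun i j => r.1 (e i, e j)⟩

variable {r : OmegaT} {m : ℕ} {e : Fin m → ℕ}

theorem le_ofMap_iff (he : Injective e) (i j : Fin m) :
    (ofMap r e).le i j ↔ leOf r (e i) (e j) :=
  or_congr ⟨congrArg e, fun h => he h⟩ Iff.rfl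

theorem isCauset_ofMap (he : ∀ i j, r.1 (e i, e j) = true → (i : ℕ) < j) :
    (ofMap r e).IsCauset :=
  ⟨fun _ _ _ => rel_trans r, he⟩

theorem isStemMap_ofMap (he : Injective e) (he_down : ∀ x j, leOf r x (e j) → ∃ i, e i = x) :
    IsStemMap (ofMap r e).le (leOf r) e :=
  ⟨he, le_ofMap_iff he, he_down⟩

theorem rel_eq_of_isStemMap {c : Code} (hc : c.IsCauset) {g : Fin c.size → ℕ}
    (hg : IsStemMap c.le (leOf r) g) (i j : Fin c.size) : r.1 (g i, g j) = c.rel i j := by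
  refine Bool.eq_iff_iff.2 ⟨fun h => ((hg.2.1 i j).2 (Or.inr h)).resolve_left ?_,
    fun h => ((hg.2.1 i j).1 (Or.inr h)).resolve_left ?_⟩
  · rintro rfl
    exact lt_irrefl _ (lt_of_rel r h)
  · intro hij
    cases hg.1 hij
    exact lt_irrefl _ (hc.2 i i h)

theorem isStemMap_val_of_mem_cyl {c : Code} (h : r ∈ cyl c.size c.rel) :
    IsStemMap c.le (leOf r) Fin.val := by
  refine ⟨Fin.val_injective, fun i j => or_congr Fin.val_inj.symm (by rw [h i j]), ?_⟩
  rintro x j (rfl | hx)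
  · exact ⟨j, rfl⟩
  · exact ⟨⟨x, (lt_of_rel r hx).trans j.2⟩, rfl⟩

end Code

section Successor

open Finset

variable {r : OmegaT}

-- The image of `g` is a lower set, so no point of `h` lies below a point of `g`.
theorem lt_of_rel_append {m : ℕ} {c : Code} (hc : c.IsCauset) {g : Fin c.size → ℕ}
    (hg : IsStemMap c.le (leOf r) g) {h : Fin m → ℕ} (hh : StrictMono h)
    (hgh : ∀ i a, g i ≠ h a) (i j : Fin (c.size + m)) :
    r.1 (Fin.append g h i, Fin.append g h j) = true → (i : ℕ) < j := by
  refine Fin.addCases (fun i => ?_) (fun a => ?_) i <;>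
    refine Fin.addCases (fun j => ?_) (fun b => ?_) j <;>
    simp only [Fin.append_left, Fin.append_right, Fin.val_castAdd, Fin.val_natAdd] <;> intro hr
  · rw [Code.rel_eq_of_isStemMap hc hg] at hr
    exact hc.2 i j hr
  · omega
  · obtain ⟨i, hi⟩ := hg.2.2 _ j (Or.inr hr)
    exact absurd hi (hgh i a)
  · exact Nat.add_lt_add_left (hh.lt_iff_lt.1 (lt_of_rel r hr)) _

theorem exists_strictMono_enum_range_sdiff {k M : ℕ} {g : Fin k → ℕ} (hg : Injective g)
    (hgM : ∀ i, g i < M) :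
    ∃ (m : ℕ) (h : Fin m → ℕ), StrictMono h ∧ m = M - k ∧ (∀ i a, g i ≠ h a) ∧
      (∀ a, h a < M) ∧ ∀ y < M, (∃ i, g i = y) ∨ ∃ a, h a = y := by
  set R := range M \ univ.image g
  have hg_sub : univ.image g ⊆ range M := by
    rintro _ hx
    obtain ⟨i, -, rfl⟩ := mem_image.1 hx
    exact mem_range.2 (hgM i)
  have hR_card : R.card = M - k := by
    rw [card_sdiff_of_subset hg_sub, card_range, card_image_of_injective _ hg, card_univ,
      Fintype.card_fin]
  have hR_mem : ∀ a, R.orderEmbOfFin rfl a ∈ R := R.orderEmbOfFin_mem rfl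
  refine ⟨R.card, R.orderEmbOfFin rfl, (R.orderEmbOfFin rfl).strictMono, hR_card,
    fun i a hia => (mem_sdiff.1 (hR_mem a)).2 (hia ▸ mem_image_of_mem g (mem_univ i)),
    fun a => mem_range.1 (mem_sdiff.1 (hR_mem a)).1, fun y hy => ?_⟩
  by_cases hyg : y ∈ univ.image g
  · obtain ⟨i, -, rfl⟩ := mem_image.1 hyg
    exact Or.inl ⟨i, rfl⟩
  · refine Or.inr (Set.mem_range.1 ?_)
    rw [range_orderEmbOfFin]
    exact mem_sdiff.2 ⟨mem_range.2 hy, hyg⟩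

theorem exists_extends_of_isStemMap {c : Code} (hc : c.IsCauset) {g : Fin c.size → ℕ}
    (hg : IsStemMap c.le (leOf r) g) {M : ℕ} (hgM : ∀ i, g i < M) (hcM : c.size < M) :
    ∃ (d : Code) (e : Fin d.size → ℕ), d.IsCauset ∧ d.Extends c ∧ c.size < d.size ∧
      IsStemMap d.le (leOf r) e ∧ ∀ y < M, ∃ i, e i = y := by
  obtain ⟨m, h, hh, rfl, hgh, hhM, hgh_surj⟩ := exists_strictMono_enum_range_sdiff hg.1 hgM
  set e := Fin.append g h
  have he_inj : Injective e := Fin.append_injective_iff.2 ⟨hg.1, hh.injective, hgh⟩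
  have he_lt : ∀ i, e i < M := Fin.addCases (by simp [e, hgM]) (by simp [e, hhM])
  have he_surj : ∀ y < M, ∃ i, e i = y := fun y hy => by
    rcases hgh_surj y hy with ⟨i, rfl⟩ | ⟨a, rfl⟩
    exacts [⟨Fin.castAdd _ i, Fin.append_left g h i⟩, ⟨Fin.natAdd _ a, Fin.append_right g h a⟩]
  have he_ext : (Code.ofMap r e).Extends c := by
    refine ⟨Nat.le_add_right _ _, fun i j hi hj => ?_⟩
    rw [Code.entry_of_lt _ (Nat.lt_add_right _ hi) (Nat.lt_add_right _ hj), c.entry_of_lt hi hj]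
    show r.1 (e (Fin.castAdd _ ⟨i, hi⟩), e (Fin.castAdd _ ⟨j, hj⟩)) = _
    simp only [e, Fin.append_left]
    exact Code.rel_eq_of_isStemMap hc hg _ _
  exact ⟨Code.ofMap r e, e, Code.isCauset_ofMap (lt_of_rel_append hc hg hh hgh), he_ext,
    by simp only [Code.ofMap]; omega,
    Code.isStemMap_ofMap he_inj fun x j hx => he_surj x ((le_of_leOf r hx).trans_lt (he_lt j)),
    he_surj⟩

def IsSuccessor (r : OmegaT) (c : Code) {n : ℕ} (s : Fin n → Fin n → Prop) (d : Code) : Prop :=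
  d.IsCauset ∧ d.Extends c ∧ c.size < d.size ∧ IsStemIn d.le (leOf r) ∧
    (IsStemIn s (leOf r) → IsStemIn s d.le)

theorem exists_isSuccessor {c : Code} (hc : c.IsCauset) (hcr : IsStemIn c.le (leOf r)) {n : ℕ}
    (s : Fin n → Fin n → Prop) : ∃ d, IsSuccessor r c s d := by
  obtain ⟨g, hg⟩ := hcr
  obtain ⟨N, hN⟩ := Finite.exists_le g
  by_cases hs : IsStemIn s (leOf r)
  · obtain ⟨f, hf⟩ := isStemIn_iff.1 hs
    obtain ⟨N', hN'⟩ := Finite.exists_le f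
    obtain ⟨d, e, hd, hdc, hsize, he, he_surj⟩ := exists_extends_of_isStemMap hc hg
      (M := N + N' + c.size + 1) (fun i => by have := hN i; omega) (by omega)
    exact ⟨d, hd, hdc, hsize, ⟨e, he⟩, fun _ => hf.isStemIn_of_forall_mem_range he.1 he.2.1
      fun i => he_surj _ (by have := hN' i; omega)⟩
  · obtain ⟨d, e, hd, hdc, hsize, he, -⟩ := exists_extends_of_isStemMap hc hg
      (M := N + c.size + 1) (fun i => by have := hN i; omega) (by omega)
    exact ⟨d, hd, hdc, hsize, ⟨e, he⟩, fun h => absurd h hs⟩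

end Successor

section Chain

noncomputable def codeEnum : ℕ → Code := (exists_surjective_nat Code).choose

theorem codeEnum_surjective : Surjective codeEnum := (exists_surjective_nat Code).choose_spec

noncomputable def posetEnum : ℕ → Σ n, (Fin n → Fin n → Prop) :=
  (exists_surjective_nat _).choose

theorem posetEnum_surjective : Surjective posetEnum := (exists_surjective_nat _).choose_spec

variable (r : OmegaT)

/- The escape clause makes the search succeed for every `r`, so `next` can use `Nat.find` without
a proof depending on `r`; along the chain it never applies. -/
theorem exists_isSuccessor_codeEnum_or (c : Code) {n : ℕ} (s : Fin n → Fin n → Prop) :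
    ∃ l, IsSuccessor r c s (codeEnum l) ∨ ¬ (c.IsCauset ∧ IsStemIn c.le (leOf r)) := by
  by_cases hc : c.IsCauset ∧ IsStemIn c.le (leOf r)
  · obtain ⟨d, hd⟩ := exists_isSuccessor hc.1 hc.2 s
    obtain ⟨l, rfl⟩ := codeEnum_surjective d
    exact ⟨l, Or.inl hd⟩
  · exact ⟨0, Or.inr hc⟩

open Classical in
noncomputable def next (c : Code) {n : ℕ} (s : Fin n → Fin n → Prop) : Code :=
  codeEnum (Nat.find (exists_isSuccessor_codeEnum_or r c s))

theorem isSuccessor_next {c : Code} (hc : c.IsCauset) (hcr : IsStemIn c.le (leOf r)) {n : ℕ}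
    (s : Fin n → Fin n → Prop) : IsSuccessor r c s (next r c s) := by
  classical
  exact (Nat.find_spec (exists_isSuccessor_codeEnum_or r c s)).resolve_right
    (not_not.2 ⟨hc, hcr⟩)

noncomputable def chain : ℕ → Code
  | 0 => default
  | k + 1 => next r (chain k) (posetEnum k).2

theorem chain_isCauset_isStemIn (k : ℕ) :
    (chain r k).IsCauset ∧ IsStemIn (chain r k).le (leOf r) := by
  induction k with
  | zero => exact ⟨⟨fun i => i.elim0, fun i => i.elim0⟩, ⟨Fin.elim0, fun i => i.elim0,
      fun i => i.elim0, fun _ j => j.elim0⟩⟩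
  | succ k ih =>
    have h := isSuccessor_next r ih.1 ih.2 (posetEnum k).2
    exact ⟨h.1, h.2.2.2.1⟩

theorem isSuccessor_chain (k : ℕ) : IsSuccessor r (chain r k) (posetEnum k).2 (chain r (k + 1)) :=
  isSuccessor_next r (chain_isCauset_isStemIn r k).1 (chain_isCauset_isStemIn r k).2 _

theorem le_size_chain (k : ℕ) : k ≤ (chain r k).size := by
  induction k with
  | zero => exact Nat.zero_le _
  | succ k ih => exact ih.trans_lt (isSuccessor_chain r k).2.2.1

theorem chain_extends {k k' : ℕ} (h : k ≤ k') : (chain r k').Extends (chain r k) := by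
  induction k', h using Nat.le_induction with
  | base => exact Code.Extends.refl _
  | succ k' _ ih => exact (isSuccessor_chain r k').2.1.trans ih

noncomputable def limitRel (p : ℕ × ℕ) : Bool := (chain r (max p.1 p.2 + 1)).entry p.1 p.2

theorem limitRel_eq_entry {k i j : ℕ} (hi : i < (chain r k).size) (hj : j < (chain r k).size) :
    limitRel r (i, j) = (chain r k).entry i j := by
  have hK := le_size_chain r (max i j + 1)
  rcases le_total k (max i j + 1) with h | h
  · exact (chain_extends r h).2 i j hi hj
  · exact ((chain_extends r h).2 i j (by omega) (by omega)).symm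

theorem limitRel_val {k : ℕ} (i j : Fin (chain r k).size) :
    limitRel r (i, j) = (chain r k).rel i j :=
  (limitRel_eq_entry r i.2 j.2).trans ((chain r k).entry_val i j)

theorem lt_size_chain {x k : ℕ} (h : x < k) : x < (chain r k).size :=
  h.trans_le (le_size_chain r k)

theorem limitRel_mem : limitRel r ∈ OmegaT := by
  refine ⟨fun x y z hxy hyz => ?_, fun x y hxy => ?_⟩
  · have hx : x < (chain r (x + y + z + 1)).size := lt_size_chain r (by omega)
    have hy : y < (chain r (x + y + z + 1)).size := lt_size_chain r (by omega)
    have hz : z < (chain r (x + y + z + 1)).size := lt_size_chain r (by omega)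
    rw [limitRel_val r ⟨x, hx⟩ ⟨y, hy⟩] at hxy
    rw [limitRel_val r ⟨y, hy⟩ ⟨z, hz⟩] at hyz
    rw [limitRel_val r ⟨x, hx⟩ ⟨z, hz⟩]
    exact (chain_isCauset_isStemIn r _).1.1 _ _ _ hxy hyz
  · have hx : x < (chain r (x + y + 1)).size := lt_size_chain r (by omega)
    have hy : y < (chain r (x + y + 1)).size := lt_size_chain r (by omega)
    rw [limitRel_val r ⟨x, hx⟩ ⟨y, hy⟩] at hxy
    exact (chain_isCauset_isStemIn r _).1.2 _ _ hxy

noncomputable def limit : OmegaT := ⟨limitRel r, limitRel_mem r⟩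

theorem limit_mem_cyl (k : ℕ) : limit r ∈ cyl (chain r k).size (chain r k).rel :=
  limitRel_val r

theorem sameStems_limit : SameStems (leOf r) (leOf (limit r)) := by
  intro n s
  constructor
  · intro hs
    obtain ⟨l, hl⟩ := posetEnum_surjective ⟨n, s⟩
    have h := isSuccessor_chain r l
    rw [hl] at h
    exact IsStemIn.trans (h.2.2.2.2 hs)
      ⟨Fin.val, Code.isStemMap_val_of_mem_cyl (limit_mem_cyl r (l + 1))⟩
  · intro hs
    obtain ⟨f, hf⟩ := isStemIn_iff.1 hs
    obtain ⟨N, hN⟩ := Finite.exists_le f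
    have hsub : ∀ i, ∃ a : Fin (chain r (N + 1)).size, (a : ℕ) = f i := fun i =>
      ⟨⟨f i, lt_size_chain r (Nat.lt_succ_of_le (hN i))⟩, rfl⟩
    exact IsStemIn.trans (hf.isStemIn_of_forall_mem_range Fin.val_injective
      (Code.isStemMap_val_of_mem_cyl (limit_mem_cyl r (N + 1))).2.1 hsub)
      (chain_isCauset_isStemIn r (N + 1)).2

end Chain

theorem measurableSet_stemSet (n : ℕ) (s : Fin n → Fin n → Prop) :
    MeasurableSet[MeasurableSpace.generateFrom stemFamily] (stemSet n s) := by
  by_cases hs : IsPartialOrder (Fin n) s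
  · exact MeasurableSpace.measurableSet_generateFrom ⟨n, s, hs, rfl⟩
  · convert @MeasurableSet.empty _ (MeasurableSpace.generateFrom stemFamily)
    exact Set.eq_empty_of_forall_notMem fun r hr => hs (IsStemIn.isPartialOrder hr)

section Measurability

abbrev stemMeasurableSpace : MeasurableSpace OmegaT := MeasurableSpace.generateFrom stemFamily

-- Within this section it takes precedence over the subspace σ-algebra of `OmegaT`.
attribute [local instance] stemMeasurableSpace

instance : MeasurableSpace Code := ⊤

instance : DiscreteMeasurableSpace Code := ⟨fun _ => MeasurableSpace.measurableSet_top⟩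

@[fun_prop]
theorem measurable_isStemIn {n : ℕ} (s : Fin n → Fin n → Prop) :
    Measurable fun r : OmegaT => IsStemIn s (leOf r) :=
  measurableSet_setOfPred.1 (measurableSet_stemSet n s)

theorem measurable_next (c : Code) {n : ℕ} (s : Fin n → Fin n → Prop) :
    Measurable fun r => next r c s := by
  classical
  refine (measurable_of_countable codeEnum).comp (measurable_find _ fun l => ?_)
  exact measurableSet_setOfPred.2 (by unfold IsSuccessor; fun_prop)

theorem measurable_chain (k : ℕ) : Measurable fun r => chain r k := by
  induction k with
  | zero => exact measurable_const
  | succ k ih =>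
    exact (measurable_from_prod_countable_left (f := fun p : OmegaT × Code => next p.1 p.2 _)
      fun c => measurable_next c (posetEnum k).2).comp (measurable_id.prodMk ih)

theorem measurable_limitRel : Measurable limitRel :=
  measurable_pi_iff.2 fun p =>
    (measurable_of_countable fun c : Code => c.entry p.1 p.2).comp (measurable_chain _)

end Measurability

theorem measurableSet_preimage_limit {A : Set OmegaT} (hA : MeasurableSet[borel OmegaT] A) :
    MeasurableSet[MeasurableSpace.generateFrom stemFamily] (limit ⁻¹' A) := by
  rw [← BorelSpace.measurable_eq] at hA
  exact (measurable_limitRel.subtype_mk (h := limitRel_mem)) hA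

theorem orderIsoRel_of_notMem_thetaT {r : OmegaT} (hr : r ∉ ThetaT) {r' : OmegaT}
    (h : SameStems (leOf r) (leOf r')) : OrderIsoRel (leOf r) (leOf r') := by
  by_contra hiso
  exact hr ⟨ℕ, leOf r', inferInstance, inferInstance, pastFinite_leOf r', hiso, h⟩

end Causet

open Causet in
/-- **Proposition 2**: for every isomorphism-invariant Borel subset `A` of Ω̃ there is a
set `B` in the σ-algebra generated by the stem sets with `A Δ B ⊆ Θ̃`. -/
theorem covariant_borel_eq_stem_set_up_to_rogues (A : Set OmegaT)
    (hA : MeasurableSet[borel OmegaT] A) (hinv : IsoInvariant A) :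
    ∃ B : Set OmegaT, MeasurableSet[MeasurableSpace.generateFrom stemFamily] B ∧
      symmDiff A B ⊆ ThetaT := by
  refine ⟨limit ⁻¹' A, measurableSet_preimage_limit hA, fun r hr => ?_⟩
  by_contra hrogue
  have hiso := orderIsoRel_of_notMem_thetaT hrogue (sameStems_limit r)
  rcases Set.mem_symmDiff.1 hr with ⟨hrA, hrB⟩ | ⟨hrB, hrA⟩
  · exact hrB (hinv _ _ hiso hrA)
  · exact hrA (hinv _ _ hiso.symm hrB)
end

section
/- For every finite partial order b, the stem set stem(b) ⊆ Ω̃ is a countable union of cylinder sets; in particular it is an open, Borel, isomorphism-invariant subset of Ω̃. -/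
open MeasureTheory

lemma cyl_isOpen (m : ℕ) (t : Fin m → Fin m → Bool) : IsOpen (cyl m t) := by
  have h : cyl m t = Subtype.val ⁻¹'
      (⋂ (i : Fin m) (j : Fin m), {g : (ℕ × ℕ) → Bool | g ((i : ℕ), (j : ℕ)) = t i j}) := by
    ext r
    simp [cyl, Set.mem_iInter]
  rw [h]
  apply IsOpen.preimage continuous_subtype_val
  apply isOpen_iInter_of_finite
  intro i
  apply isOpen_iInter_of_finite
  intro j
  have : {g : (ℕ × ℕ) → Bool | g ((i : ℕ), (j : ℕ)) = t i j} =
      (fun g : (ℕ × ℕ) → Bool => g ((i : ℕ), (j : ℕ))) ⁻¹' {t i j} := rfl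
  rw [this]
  exact (isOpen_discrete _).preimage (continuous_apply _)

lemma cylFamily_countable : cylFamily.Countable := by
  have h : cylFamily ⊆ Set.range (fun p : Σ m, (Fin m → Fin m → Bool) => cyl p.1 p.2) := by
    rintro C ⟨m, t, _, rfl⟩
    exact ⟨⟨m, t⟩, rfl⟩
  exact (Set.countable_range _).mono h

lemma stemSet_mem_cyl {n : ℕ} {s : Fin n → Fin n → Prop} {r : OmegaT}
    (hr : r ∈ stemSet n s) :
    ∃ (m : ℕ) (t : Fin m → Fin m → Bool),
      IsFinCauset m t ∧ r ∈ cyl m t ∧ cyl m t ⊆ stemSet n s := by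
  obtain ⟨f, hinj, hiff, hdown⟩ := hr
  set m := Finset.univ.sup (fun i => f i + 1) with hm
  have hfm : ∀ i, f i < m := fun i =>
    Nat.lt_of_succ_le (Finset.le_sup (f := fun i => f i + 1) (Finset.mem_univ i))
  refine ⟨m, fun i j => (r : (ℕ × ℕ) → Bool) ((i : ℕ), (j : ℕ)), ⟨?_, ?_⟩, fun i j => rfl, ?_⟩
  · intro i j k hij hjk
    exact r.property.1 _ _ _ hij hjk
  · intro i j hij
    exact r.property.2 _ _ hij
  · intro r' hr'
    have key : ∀ x y : ℕ, x < m → y < m →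
        (r' : (ℕ × ℕ) → Bool) (x, y) = (r : (ℕ × ℕ) → Bool) (x, y) := by
      intro x y hx hy
      exact hr' ⟨x, hx⟩ ⟨y, hy⟩
    refine ⟨f, hinj, ?_, ?_⟩
    · intro i j
      rw [hiff i j]
      unfold leOf
      rw [key (f i) (f j) (hfm i) (hfm j)]
    · intro x j hxj
      rcases hxj with heq | hlt
      · exact ⟨j, heq.symm⟩
      · have hx : x < f j := r'.property.2 x (f j) hlt
        have hxm : x < m := hx.trans (hfm j)
        rw [key x (f j) hxm (hfm j)] at hlt
        exact hdown x j (Or.inr hlt)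

lemma stemSet_isoInvariant (n : ℕ) (s : Fin n → Fin n → Prop) :
    IsoInvariant (stemSet n s) := by
  rintro r₁ r₂ ⟨e, he⟩ ⟨f, hinj, hiff, hdown⟩
  refine ⟨fun i => e (f i), fun a b h => hinj (e.injective h), ?_, ?_⟩
  · intro i j
    exact (hiff i j).trans (he (f i) (f j))
  · intro x j hx
    have h1 : leOf r₁ (e.symm x) (f j) := by
      rw [he (e.symm x) (f j), e.apply_symm_apply]
      exact hx
    obtain ⟨i, hi⟩ := hdown (e.symm x) j h1
    exact ⟨i, by show e (f i) = x; rw [hi, e.apply_symm_apply]⟩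

/-- For every finite partial order `s`, the stem set `stem(s) ⊆ Ω̃` is a countable union
of cylinder sets; in particular it is open, Borel, and isomorphism-invariant. -/
theorem stemSet_countable_union_of_cylinders (n : ℕ) (s : Fin n → Fin n → Prop)
    (hs : IsPartialOrder (Fin n) s) :
    (∃ 𝒞 ⊆ cylFamily, 𝒞.Countable ∧ stemSet n s = ⋃₀ 𝒞) ∧
    IsOpen (stemSet n s) ∧
    MeasurableSet[borel OmegaT] (stemSet n s) ∧
    IsoInvariant (stemSet n s) := by
  set 𝒞 : Set (Set OmegaT) := {C | C ∈ cylFamily ∧ C ⊆ stemSet n s} with h𝒞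
  have hsub : 𝒞 ⊆ cylFamily := fun C hC => hC.1
  have hcnt : 𝒞.Countable := cylFamily_countable.mono hsub
  have heq : stemSet n s = ⋃₀ 𝒞 := by
    apply Set.Subset.antisymm
    · intro r hr
      obtain ⟨m, t, hfc, hmem, hsubset⟩ := stemSet_mem_cyl hr
      exact ⟨cyl m t, ⟨⟨m, t, hfc, rfl⟩, hsubset⟩, hmem⟩
    · rintro r ⟨C, hC, hrC⟩
      exact hC.2 hrC
  have hopen : IsOpen (stemSet n s) := by
    rw [heq]
    apply isOpen_sUnion
    rintro C ⟨⟨m, t, _, rfl⟩, _⟩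
    exact cyl_isOpen m t
  refine ⟨⟨𝒞, hsub, hcnt, heq⟩, hopen, ?_, stemSet_isoInvariant n s⟩
  exact MeasurableSpace.measurableSet_generateFrom hopen
end

section
/- If r₁, r₂ ∈ Ω̃ are such that the posets (ℕ, r₁) and (ℕ, r₂) have the same stems, then for every set B in the σ-algebra generated by the stem sets, r₁ ∈ B if and only if r₂ ∈ B. In other words, sets in R(S) cannot separate two causets having the same stems. -/
open MeasureTheory

/-- Sets in the σ-algebra generated by the stem sets cannot separate two causets having
the same stems. -/
theorem stem_sigmaAlgebra_cannot_separate_same_stems (r₁ r₂ : OmegaT)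
    (h : SameStems (leOf r₁) (leOf r₂)) :
    ∀ B : Set OmegaT, MeasurableSet[MeasurableSpace.generateFrom stemFamily] B →
      (r₁ ∈ B ↔ r₂ ∈ B) := by
  intro B hB
  induction hB with
  | basic S hS =>
    obtain ⟨n, s, _, rfl⟩ := hS
    exact h n s
  | empty => simp
  | compl S _ ih => simp [ih]
  | iUnion f _ ih => simp only [Set.mem_iUnion]; exact exists_congr ih
end

section
/- Let c₁ be the partial order on ℕ × ℕ in which (i, m) < (j, n) iff i = j and m < n (a disjoint union of countably many infinite chains), and let c₂ be the partial order on (ℕ × ℕ) ⊕ Unit in which the ℕ × ℕ part is ordered as c₁ and the extra point is incomparable to everything else. Then c₁ and c₂ have the same stems but are not order-isomorphic: c₂ has a maximal element while c₁ has none. Consequently, the isomorphism-invariant Borel set Γ' = {r ∈ Ω̃ : the poset (ℕ, r) has a maximal element} does not belong to the σ-algebra generated by the stem sets. -/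
open MeasureTheory

/-- `c₁`: the disjoint union of countably many infinite chains, as a partial order on
`ℕ × ℕ` with `(i, m) ≤ (j, n)` iff `i = j` and `m ≤ n`. -/
def leC₁ (p q : ℕ × ℕ) : Prop := p.1 = q.1 ∧ p.2 ≤ q.2

/-- `c₂`: `c₁` together with one extra point incomparable to everything else. -/
def leC₂ : (ℕ × ℕ) ⊕ Unit → (ℕ × ℕ) ⊕ Unit → Prop
  | Sum.inl p, Sum.inl q => leC₁ p q
  | Sum.inr _, Sum.inr _ => True
  | _, _ => False

section GammaAux

/-! ### Auxiliary lemmas -/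

@[simp] lemma leC₂_inl_inl (p q : ℕ × ℕ) : leC₂ (Sum.inl p) (Sum.inl q) ↔ leC₁ p q := Iff.rfl
@[simp] lemma leC₂_inl_inr (p : ℕ × ℕ) (u : Unit) : leC₂ (Sum.inl p) (Sum.inr u) ↔ False := Iff.rfl
@[simp] lemma leC₂_inr_inl (p : ℕ × ℕ) (u : Unit) : leC₂ (Sum.inr u) (Sum.inl p) ↔ False := Iff.rfl
@[simp] lemma leC₂_inr_inr (u v : Unit) : leC₂ (Sum.inr u) (Sum.inr v) ↔ True := Iff.rfl

lemma orderIsoRel_symm {α β : Type} {le₁ : α → α → Prop} {le₂ : β → β → Prop}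
    (h : OrderIsoRel le₁ le₂) : OrderIsoRel le₂ le₁ := by
  obtain ⟨e, he⟩ := h
  refine ⟨e.symm, fun x y => ?_⟩
  have := he (e.symm x) (e.symm y)
  simpa using this.symm

lemma isStemIn_of_iso {α β : Type} {n : ℕ} {s : Fin n → Fin n → Prop}
    {le₁ : α → α → Prop} {le₂ : β → β → Prop}
    (h : OrderIsoRel le₁ le₂) (hs : IsStemIn s le₁) : IsStemIn s le₂ := by
  obtain ⟨e, he⟩ := h
  obtain ⟨f, finj, ford, fdown⟩ := hs
  refine ⟨fun i => e (f i), fun i j hij => finj (e.injective hij), fun i j => (ford i j).trans (he _ _), ?_⟩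
  intro x j hx
  have hx' : le₁ (e.symm x) (f j) := by
    rw [he (e.symm x) (f j)]
    simpa using hx
  obtain ⟨i, hi⟩ := fdown (e.symm x) j hx'
  exact ⟨i, by show e (f i) = x; rw [hi]; simp⟩

lemma isStemIn_congr {α β : Type} {n : ℕ} {s : Fin n → Fin n → Prop}
    {le₁ : α → α → Prop} {le₂ : β → β → Prop}
    (h : OrderIsoRel le₁ le₂) : IsStemIn s le₁ ↔ IsStemIn s le₂ :=
  ⟨isStemIn_of_iso h, isStemIn_of_iso (orderIsoRel_symm h)⟩

/-! ### Same stems for `c₁` and `c₂` -/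

lemma sameStems_c : SameStems leC₁ leC₂ := by
  intro n s
  constructor
  · rintro ⟨f, finj, ford, fdown⟩
    refine ⟨fun i => Sum.inl (f i), fun i j hij => finj (Sum.inl.inj hij),
      fun i j => (ford i j).trans (leC₂_inl_inl _ _).symm, ?_⟩
    intro x j hx
    cases x with
    | inl p =>
        obtain ⟨i, hi⟩ := fdown p j ((leC₂_inl_inl _ _).mp hx)
        exact ⟨i, by show Sum.inl (f i) = Sum.inl p; rw [hi]⟩
    | inr u => exact absurd hx (by simp)
  · rintro ⟨f, finj, ford, fdown⟩
    set i₀ : ℕ := (Finset.univ.sup fun j : Fin n => Sum.elim Prod.fst (fun _ => 0) (f j)) + 1 with hi₀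
    have hfresh : ∀ (j : Fin n) (p : ℕ × ℕ), f j = Sum.inl p → p.1 < i₀ := by
      intro j p hp
      have h1 : Sum.elim Prod.fst (fun _ => 0) (f j) ≤
          Finset.univ.sup fun j : Fin n => Sum.elim Prod.fst (fun _ => 0) (f j) :=
        Finset.le_sup (f := fun j : Fin n => Sum.elim Prod.fst (fun _ => 0) (f j)) (Finset.mem_univ j)
      rw [hp] at h1
      simp only [Sum.elim_inl] at h1
      omega
    refine ⟨fun j => Sum.elim id (fun _ => ((i₀ : ℕ), (0 : ℕ))) (f j), ?_, ?_, ?_⟩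
    · intro j j' hjj'
      apply finj
      simp only at hjj'
      cases hj : f j with
      | inl p =>
        cases hj' : f j' with
        | inl q =>
            simp only [hj, hj', Sum.elim_inl, id] at hjj'
            rw [hjj']
        | inr u =>
            simp only [hj, hj', Sum.elim_inl, Sum.elim_inr, id] at hjj'
            have := hfresh j p hj
            rw [hjj'] at this
            omega
      | inr u =>
        cases hj' : f j' with
        | inl q =>
            simp only [hj, hj', Sum.elim_inl, Sum.elim_inr, id] at hjj'
            have := hfresh j' q hj'
            rw [← hjj'] at this
            omega
        | inr u' => cases u; cases u'; rfl
    · intro i j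
      simp only []
      rw [ford i j]
      cases hi : f i with
      | inl p =>
        cases hj : f j with
        | inl q => simp [hi, hj]
        | inr u =>
            simp only [hi, hj, Sum.elim_inl, Sum.elim_inr, id, leC₂_inl_inr]
            have := hfresh i p hi
            simp only [leC₁, false_iff]
            rintro ⟨h1, -⟩
            omega
      | inr u =>
        cases hj : f j with
        | inl q =>
            simp only [hi, hj, Sum.elim_inl, Sum.elim_inr, id, leC₂_inr_inl]
            have := hfresh j q hj
            simp only [leC₁, false_iff]
            rintro ⟨h1, -⟩
            omega
        | inr u' => simp [hi, hj, leC₁]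
    · intro x j hx
      simp only [] at hx
      cases hj : f j with
      | inl p =>
          rw [hj] at hx
          simp only [Sum.elim_inl, id] at hx
          obtain ⟨i, hi⟩ := fdown (Sum.inl x) j (by rw [hj]; exact (leC₂_inl_inl _ _).mpr hx)
          exact ⟨i, by show Sum.elim id _ (f i) = x; rw [hi]; rfl⟩
      | inr u =>
          rw [hj] at hx
          simp only [Sum.elim_inr] at hx
          obtain ⟨h1, h2⟩ := hx
          refine ⟨j, ?_⟩
          show Sum.elim id _ (f j) = x
          rw [hj]
          simp only [Sum.elim_inr]
          obtain ⟨a, b⟩ := x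
          simp only [Prod.mk.injEq]
          constructor <;> omega

/-! ### Maximal elements of `c₁` and `c₂` -/

lemma max_c₂ : IsMaximalRel leC₂ (Sum.inr ()) := by
  intro y hy
  cases y with
  | inl p => exact absurd hy (by simp)
  | inr u => cases u; rfl

lemma noMax_c₁ : ¬ ∃ x, IsMaximalRel leC₁ x := by
  rintro ⟨⟨i, m⟩, h⟩
  have := h (i, m + 1) ⟨rfl, Nat.le_succ m⟩
  simp only [Prod.mk.injEq] at this
  omega

lemma not_iso_c : ¬ OrderIsoRel leC₁ leC₂ := by
  rintro ⟨e, he⟩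
  apply noMax_c₁
  refine ⟨e.symm (Sum.inr ()), fun z hz => ?_⟩
  have h1 : leC₂ (Sum.inr ()) (e z) := by
    have := (he (e.symm (Sum.inr ())) z).mp hz
    simpa using this
  have h2 : e z = Sum.inr () := max_c₂ (e z) h1
  calc z = e.symm (e z) := (e.symm_apply_apply z).symm
    _ = e.symm (Sum.inr ()) := by rw [h2]

/-! ### Encodings of `c₁` and `c₂` as elements of Ω̃ -/

def chainB (a b : ℕ) : Bool :=
  decide ((Nat.unpair a).1 = (Nat.unpair b).1 ∧ (Nat.unpair a).2 < (Nat.unpair b).2)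

lemma chainB_iff (a b : ℕ) :
    chainB a b = true ↔ (Nat.unpair a).1 = (Nat.unpair b).1 ∧ (Nat.unpair a).2 < (Nat.unpair b).2 := by
  simp [chainB]

lemma chainB_lt {a b : ℕ} (h : chainB a b = true) : a < b := by
  rw [chainB_iff] at h
  calc a = Nat.pair (Nat.unpair a).1 (Nat.unpair a).2 := (Nat.pair_unpair a).symm
    _ < Nat.pair (Nat.unpair a).1 (Nat.unpair b).2 := Nat.pair_lt_pair_right _ h.2
    _ = Nat.pair (Nat.unpair b).1 (Nat.unpair b).2 := by rw [h.1]
    _ = b := Nat.pair_unpair b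

lemma chainB_trans {a b c : ℕ} (h1 : chainB a b = true) (h2 : chainB b c = true) :
    chainB a c = true := by
  rw [chainB_iff] at *
  exact ⟨h1.1.trans h2.1, h1.2.trans h2.2⟩

def rc₁ : ℕ × ℕ → Bool := fun p => chainB p.1 p.2

def rc₂ : ℕ × ℕ → Bool := fun p =>
  match p with
  | (a+1, b+1) => chainB a b
  | _ => false

lemma rc₁_mem : rc₁ ∈ OmegaT :=
  ⟨fun x y z h1 h2 => chainB_trans h1 h2, fun x y h => chainB_lt h⟩

lemma rc₂_succ (a b : ℕ) : rc₂ (a + 1, b + 1) = chainB a b := rfl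
lemma rc₂_zero_left (y : ℕ) : rc₂ (0, y) = false := rfl
lemma rc₂_zero_right (x : ℕ) : rc₂ (x, 0) = false := by
  cases x <;> rfl

lemma rc₂_mem : rc₂ ∈ OmegaT := by
  constructor
  · intro x y z h1 h2
    match x, y, z with
    | a+1, b+1, c+1 =>
        rw [rc₂_succ] at *
        exact chainB_trans h1 h2
    | 0, _, _ => rw [rc₂_zero_left] at h1; exact absurd h1 Bool.false_ne_true
    | _+1, 0, _ => rw [rc₂_zero_right] at h1; exact absurd h1 Bool.false_ne_true
    | _+1, _+1, 0 => rw [rc₂_zero_right] at h2; exact absurd h2 Bool.false_ne_true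
  · intro x y h
    match x, y with
    | a+1, b+1 =>
        rw [rc₂_succ] at h
        have := chainB_lt h
        omega
    | 0, _ => rw [rc₂_zero_left] at h; exact absurd h Bool.false_ne_true
    | _+1, 0 => rw [rc₂_zero_right] at h; exact absurd h Bool.false_ne_true

def R₁ : OmegaT := ⟨rc₁, rc₁_mem⟩
def R₂ : OmegaT := ⟨rc₂, rc₂_mem⟩

lemma unpair_inj {a b : ℕ} (h : Nat.unpair a = Nat.unpair b) : a = b := by
  calc a = Nat.pair (Nat.unpair a).1 (Nat.unpair a).2 := (Nat.pair_unpair a).symm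
    _ = Nat.pair (Nat.unpair b).1 (Nat.unpair b).2 := by rw [h]
    _ = b := Nat.pair_unpair b

lemma key_c₁ (a b : ℕ) :
    (a = b ∨ chainB a b = true) ↔ leC₁ (Nat.unpair a) (Nat.unpair b) := by
  rw [chainB_iff]
  constructor
  · rintro (rfl | ⟨h1, h2⟩)
    · exact ⟨rfl, le_refl _⟩
    · exact ⟨h1, le_of_lt h2⟩
  · rintro ⟨h1, h2⟩
    rcases lt_or_eq_of_le h2 with h | h
    · exact Or.inr ⟨h1, h⟩
    · exact Or.inl (unpair_inj (Prod.ext h1 h))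

def eqv₁ : ℕ ≃ ℕ × ℕ where
  toFun := Nat.unpair
  invFun := fun p => Nat.pair p.1 p.2
  left_inv := Nat.pair_unpair
  right_inv := fun p => by simp [Nat.unpair_pair]

lemma iso₁ : OrderIsoRel (leOf R₁) leC₁ := by
  refine ⟨eqv₁, fun x y => ?_⟩
  show (x = y ∨ chainB x y = true) ↔ leC₁ (Nat.unpair x) (Nat.unpair y)
  exact key_c₁ x y

def eqv₂ : ℕ ≃ (ℕ × ℕ) ⊕ Unit where
  toFun := fun n => match n with
    | 0 => Sum.inr ()
    | k+1 => Sum.inl (Nat.unpair k)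
  invFun := Sum.elim (fun p => Nat.pair p.1 p.2 + 1) (fun _ => 0)
  left_inv := fun n => by cases n <;> simp [Nat.pair_unpair]
  right_inv := fun x => by cases x <;> simp [Nat.unpair_pair]

lemma iso₂ : OrderIsoRel (leOf R₂) leC₂ := by
  refine ⟨eqv₂, fun x y => ?_⟩
  match x, y with
  | 0, 0 => simp [leOf, eqv₂, R₂, rc₂_zero_left]
  | 0, b+1 =>
      show (0 = b + 1 ∨ rc₂ (0, b+1) = true) ↔ False
      rw [rc₂_zero_left]
      simp
  | a+1, 0 =>
      show (a + 1 = 0 ∨ rc₂ (a+1, 0) = true) ↔ False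
      rw [rc₂_zero_right]
      simp
  | a+1, b+1 =>
      show (a + 1 = b + 1 ∨ rc₂ (a+1, b+1) = true) ↔ leC₁ (Nat.unpair a) (Nat.unpair b)
      rw [rc₂_succ, ← key_c₁]
      constructor <;> rintro (h | h)
      · exact Or.inl (by omega)
      · exact Or.inr h
      · exact Or.inl (by omega)
      · exact Or.inr h

lemma sameStems_R : SameStems (leOf R₁) (leOf R₂) := by
  intro n s
  rw [isStemIn_congr iso₁, isStemIn_congr iso₂]
  exact sameStems_c n s

lemma noMax_R₁ : ¬ ∃ x : ℕ, IsMaximalRel (leOf R₁) x := by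
  rintro ⟨x, hx⟩
  set y := Nat.pair (Nat.unpair x).1 ((Nat.unpair x).2 + 1) with hy
  have hr : chainB x y = true := by
    rw [chainB_iff, hy, Nat.unpair_pair]
    exact ⟨rfl, Nat.lt_succ_self _⟩
  have h1 : y = x := hx y (Or.inr hr)
  have h2 : x < y := chainB_lt hr
  omega

lemma max_R₂ : IsMaximalRel (leOf R₂) 0 := by
  intro y hy
  rcases hy with h | h
  · exact h.symm
  · rw [show ((R₂ : (ℕ × ℕ) → Bool) (0, y)) = rc₂ (0, y) from rfl, rc₂_zero_left] at h
    exact absurd h Bool.false_ne_true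

end GammaAux


/-- `c₁` and `c₂` have the same stems but are not order-isomorphic: `c₂` has a maximal
element (the extra point) while `c₁` has none.  Consequently, the isomorphism-invariant
Borel set `Γ' = {r ∈ Ω̃ : (ℕ, r) has a maximal element}` does not belong to the
σ-algebra generated by the stem sets. -/
theorem gammaPrime_not_in_stem_sigmaAlgebra :
    SameStems leC₁ leC₂ ∧
    ¬ OrderIsoRel leC₁ leC₂ ∧
    (∃ x, IsMaximalRel leC₂ x) ∧
    (¬ ∃ x, IsMaximalRel leC₁ x) ∧
    IsoInvariant {r : OmegaT | ∃ x : ℕ, IsMaximalRel (leOf r) x} ∧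
    MeasurableSet[borel OmegaT] {r : OmegaT | ∃ x : ℕ, IsMaximalRel (leOf r) x} ∧
    ¬ MeasurableSet[MeasurableSpace.generateFrom stemFamily]
        {r : OmegaT | ∃ x : ℕ, IsMaximalRel (leOf r) x} := by
  refine ⟨sameStems_c, not_iso_c, ⟨Sum.inr (), max_c₂⟩, noMax_c₁, ?_, ?_, ?_⟩
  · -- IsoInvariant
    rintro r₁ r₂ ⟨e, he⟩ ⟨x, hx⟩
    refine ⟨e x, fun y hy => ?_⟩
    have h1 : leOf r₁ x (e.symm y) := by
      rw [he x (e.symm y)]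
      simpa using hy
    have h2 : e.symm y = x := hx _ h1
    calc y = e (e.symm y) := (e.apply_symm_apply y).symm
      _ = e x := by rw [h2]
  · -- Borel measurable
    have hset : {r : OmegaT | ∃ x : ℕ, IsMaximalRel (leOf r) x} =
        ⋃ x : ℕ, ⋂ y : ℕ, {r : OmegaT | ¬ ((r : (ℕ × ℕ) → Bool) (x, y) = true)} := by
      ext r
      simp only [Set.mem_iUnion, Set.mem_iInter, Set.mem_setOf_eq]
      constructor
      · rintro ⟨x, hx⟩
        refine ⟨x, fun y hy => ?_⟩
        have h1 : y = x := hx y (Or.inr hy)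
        have h2 : x < y := r.2.2 x y hy
        omega
      · rintro ⟨x, hx⟩
        refine ⟨x, fun y hy => ?_⟩
        rcases hy with rfl | h
        · rfl
        · exact absurd h (hx y)
    rw [hset]
    have key : ∀ (U : Set OmegaT), IsOpen U → MeasurableSet[borel OmegaT] U :=
      fun U hU => MeasurableSpace.measurableSet_generateFrom hU
    refine MeasurableSet.iUnion fun x => MeasurableSet.iInter fun y => key _ ?_
    have hc : Continuous (fun r : OmegaT => (r : (ℕ × ℕ) → Bool) (x, y)) :=
      (continuous_apply ((x : ℕ), (y : ℕ))).comp continuous_subtype_val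
    exact hc.isOpen_preimage {b : Bool | ¬ b = true} (isOpen_discrete _)
  · -- not measurable in stem σ-algebra
    intro hmem
    have sep : ∀ (A : Set OmegaT), MeasurableSet[MeasurableSpace.generateFrom stemFamily] A →
        (R₁ ∈ A ↔ R₂ ∈ A) := by
      intro A hA
      refine MeasurableSpace.generateFrom_induction stemFamily
        (fun t _ => (R₁ ∈ t ↔ R₂ ∈ t)) ?_ Iff.rfl ?_ ?_ A hA
      · rintro t ⟨n, s, hpo, rfl⟩ ht
        exact sameStems_R n s
      · intro t ht h
        simp only [Set.mem_compl_iff]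
        exact not_congr h
      · intro f hf h
        simp only [Set.mem_iUnion]
        exact exists_congr h
    have h1 : R₁ ∈ {r : OmegaT | ∃ x : ℕ, IsMaximalRel (leOf r) x} ↔
        R₂ ∈ {r : OmegaT | ∃ x : ℕ, IsMaximalRel (leOf r) x} := sep _ hmem
    exact noMax_R₁ (h1.mpr ⟨0, max_R₂⟩)
end

section
/- A countable past-finite partial order has an infinite level (i.e., some k for which the set of elements of level k is infinite) if and only if it contains an infinite antichain all of whose elements have the same past. -/
/-!
Elements of equal level are pairwise incomparable, since going strictly up raises the level,
and the level of an element is determined by its strict past. If `k` is the least infinite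
level, the strict past of every element of level `k` lies in the finite set of elements of
lower level, so by pigeonhole infinitely many elements of level `k` share the same past.
Conversely, an infinite antichain with a common past lies inside a single level.
-/

theorem Set.Infinite.exists_infinite_fiber_of_mapsTo {α β : Type*} {s : Set α} {t : Set β}
    {f : α → β} (hs : s.Infinite) (hf : Set.MapsTo f s t) (ht : t.Finite) :
    ∃ y ∈ t, {x ∈ s | f x = y}.Infinite := by
  by_contra! h
  refine hs ((ht.biUnion h).subset fun x hx => ?_)
  exact Set.mem_biUnion (hf hx) ⟨hx, rfl⟩

section

variable {α : Type} {le : α → α → Prop}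

theorem chainTo_zero (x : α) : ChainTo le x 0 :=
  ⟨fun _ => x, fun i j hij => absurd hij (by simp [Fin.fin_one_eq_zero i, Fin.fin_one_eq_zero j]), rfl⟩

theorem le_last_of_chain [Std.Refl le] {k : ℕ} {f : Fin (k + 1) → α}
    (hf : ∀ i j : Fin (k + 1), i < j → LtRel le (f i) (f j)) (i : Fin (k + 1)) :
    le (f i) (f (Fin.last k)) := by
  rcases (Fin.le_last i).lt_or_eq with hi | rfl
  · exact (hf i _ hi).1
  · exact refl_of le _

theorem ChainTo.succ [IsPartialOrder α le] {x z : α} {m : ℕ} (hc : ChainTo le z m)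
    (hzx : LtRel le z x) : ChainTo le x (m + 1) := by
  obtain ⟨f, hf, rfl⟩ := hc
  refine ⟨Fin.snoc f x, fun i j hij => ?_, Fin.snoc_last _ _⟩
  induction j using Fin.lastCases with
  | last =>
    induction i using Fin.lastCases with
    | last => exact absurd hij (lt_irrefl _)
    | cast i =>
      have hi := le_last_of_chain hf i
      simp only [Fin.snoc_castSucc, Fin.snoc_last]
      exact ⟨trans_of le hi hzx.1, fun h => hzx.2 (antisymm_of le hzx.1 (h ▸ hi))⟩
  | cast j =>
    induction i using Fin.lastCases with
    | last => exact absurd hij (not_lt.2 (Fin.le_last _))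
    | cast i =>
      simp only [Fin.snoc_castSucc]
      exact hf i j (Fin.castSucc_lt_castSucc_iff.1 hij)

theorem ChainTo.lt_card_past [Std.Refl le] (hpf : PastFinite le) {x : α} {m : ℕ}
    (hc : ChainTo le x m) : m < (hpf x).toFinset.card := by
  obtain ⟨f, hf, rfl⟩ := hc
  have hinj : Function.Injective f := fun i j h => by
    by_contra hij
    rcases lt_or_gt_of_ne hij with hij | hij
    exacts [(hf i j hij).2 h, (hf j i hij).2 h.symm]
  simpa using Finset.card_le_card_of_injOn (s := Finset.univ) f
    (fun i _ => (hpf _).mem_toFinset.2 (le_last_of_chain hf i)) hinj.injOn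

theorem exists_hasLevel [Std.Refl le] (hpf : PastFinite le) (x : α) : ∃ k, HasLevel le x k := by
  classical
  exact ⟨Nat.findGreatest (ChainTo le x) (hpf x).toFinset.card,
    Nat.findGreatest_spec (Nat.zero_le _) (chainTo_zero x),
    fun m hm => Nat.le_findGreatest (hm.lt_card_past hpf).le hm⟩

theorem ChainTo.of_strictPast_eq {x y : α} {m : ℕ}
    (hpast : {z | LtRel le z x} = {z | LtRel le z y}) (hc : ChainTo le x m) :
    ChainTo le y m := by
  obtain ⟨f, hf, rfl⟩ := hc
  refine ⟨Function.update f (Fin.last m) y, fun i j hij => ?_, Function.update_self ..⟩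
  have hi : i ≠ Fin.last m := (hij.trans_le (Fin.le_last j)).ne
  rw [Function.update_of_ne hi]
  rcases eq_or_ne j (Fin.last m) with rfl | hj
  · rw [Function.update_self]
    exact hpast.subset (hf i _ hij)
  · rw [Function.update_of_ne hj]
    exact hf i j hij

theorem HasLevel.of_strictPast_eq {x y : α} {k : ℕ}
    (hpast : {z | LtRel le z x} = {z | LtRel le z y}) (h : HasLevel le x k) :
    HasLevel le y k :=
  ⟨h.1.of_strictPast_eq hpast, fun m hm => h.2 m (hm.of_strictPast_eq hpast.symm)⟩

variable [IsPartialOrder α le]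

theorem HasLevel.lt_of_ltRel {x z : α} {j k : ℕ} (hz : HasLevel le z j) (hx : HasLevel le x k)
    (hzx : LtRel le z x) : j < k :=
  hx.2 _ (hz.1.succ hzx)

theorem HasLevel.not_le_of_ne {x y : α} {k : ℕ} (hx : HasLevel le x k) (hy : HasLevel le y k)
    (hxy : x ≠ y) : ¬ le x y :=
  fun h => lt_irrefl k (hx.lt_of_ltRel hy ⟨h, hxy⟩)

theorem strictPast_subset_lowerLevels (hpf : PastFinite le) {x : α} {k : ℕ}
    (hx : HasLevel le x k) : {z | LtRel le z x} ⊆ ⋃ j ∈ Set.Iio k, {z | HasLevel le z j} :=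
  fun z hz =>
    let ⟨_, hj⟩ := exists_hasLevel hpf z
    Set.mem_biUnion (hj.lt_of_ltRel hx hz) hj

end

theorem infinite_level_iff_infinite_antichain_same_past_general (α : Type) (le : α → α → Prop)
    (hpo : IsPartialOrder α le) (hpf : PastFinite le) :
    (∃ k : ℕ, {x : α | HasLevel le x k}.Infinite) ↔
      ∃ A : Set α, A.Infinite ∧
        (∀ x ∈ A, ∀ y ∈ A, x ≠ y → ¬ le x y ∧ ¬ le y x) ∧
        (∀ x ∈ A, ∀ y ∈ A, {z : α | LtRel le z x} = {z : α | LtRel le z y}) := by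
  classical
  constructor
  · intro h
    obtain ⟨k, hk, hbelow⟩ : ∃ k, {x | HasLevel le x k}.Infinite ∧
        ∀ j ∈ Set.Iio k, {x | HasLevel le x j}.Finite :=
      ⟨Nat.find h, Nat.find_spec h, fun j hj => Set.not_infinite.1 (Nat.find_min h hj)⟩
    obtain ⟨p, -, hp⟩ := hk.exists_infinite_fiber_of_mapsTo
      (fun x hx => strictPast_subset_lowerLevels hpf hx)
      ((Set.finite_Iio k).biUnion hbelow).finite_subsets
    refine ⟨_, hp, fun x hx y hy hxy => ?_, fun x hx y hy => hx.2.trans hy.2.symm⟩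
    exact ⟨hx.1.not_le_of_ne hy.1 hxy, hy.1.not_le_of_ne hx.1 hxy.symm⟩
  · rintro ⟨A, hA, -, hpast⟩
    obtain ⟨x, hx⟩ := hA.nonempty
    obtain ⟨k, hk⟩ := exists_hasLevel hpf x
    exact ⟨k, hA.mono fun y hy => hk.of_strictPast_eq (hpast x hx y hy)⟩

/-- A countable past-finite partial order has an infinite level iff it contains an
infinite antichain all of whose elements have the same (strict) past. -/
theorem infinite_level_iff_infinite_antichain_same_past (α : Type) (le : α → α → Prop)
    (hpo : IsPartialOrder α le) (hc : Countable α) (hpf : PastFinite le) :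
    (∃ k : ℕ, {x : α | HasLevel le x k}.Infinite) ↔
      ∃ A : Set α, A.Infinite ∧
        (∀ x ∈ A, ∀ y ∈ A, x ≠ y → ¬ le x y ∧ ¬ le y x) ∧
        (∀ x ∈ A, ∀ y ∈ A, {z : α | LtRel le z x} = {z : α | LtRel le z y}) :=
  infinite_level_iff_infinite_antichain_same_past_general α le hpo hpf
end
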